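/- arXiv:2307.01046 — 8 statements merged into one kernel-verified Lean document; each statement's English description precedes it below -/
import Mathlib

section
/- Let X be a finite linearly ordered set, let I ⊆ X be an interval (a set of consecutive elements of X), and fix i ∈ I. Let π be a partition of the set (X ∖ I) ∪ {i} that is non-crossing with respect to the order inherited from X. Then the partition of X obtained from π by replacing the block S containing i with S ∪ I (leaving all other blocks unchanged) is non-crossing with respect to the order of X. -/
/-- `P` is a partition of the set `Y`: its blocks are nonempty, pairwise
disjoint, and their union is `Y`. -/
def IsPartitionOn {α : Type*} (Y : Set α) (P : Set (Set α)) : Prop :=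
  (∀ S ∈ P, S.Nonempty) ∧ (∀ S ∈ P, ∀ T ∈ P, S ≠ T → Disjoint S T) ∧ ⋃₀ P = Y

/-- Two blocks `A` and `B` cross (with respect to a strict order `lt` on the
ground set) if there are `a1, a2 ∈ A` and `b1, b2 ∈ B` with
`a1 < b1 < a2 < b2` or `b1 < a1 < b2 < a2`. -/
def Crosses {α : Type*} (lt : α → α → Prop) (A B : Set α) : Prop :=
  ∃ a1 ∈ A, ∃ a2 ∈ A, ∃ b1 ∈ B, ∃ b2 ∈ B,
    (lt a1 b1 ∧ lt b1 a2 ∧ lt a2 b2) ∨ (lt b1 a1 ∧ lt a1 b2 ∧ lt b2 a2)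

/-- A family of blocks is non-crossing for `lt` if no two of its blocks cross. -/
def NonCrossingFam {α : Type*} (lt : α → α → Prop) (P : Set (Set α)) : Prop :=
  ∀ A ∈ P, ∀ B ∈ P, A ≠ B → ¬ Crosses lt A B

/-- `I` is an interval of a linearly ordered set: there is no element strictly
between two elements of `I` that is outside `I`. -/
def IsInterval {α : Type*} [LT α] (I : Set α) : Prop :=
  ∀ a1 ∈ I, ∀ a2 ∈ I, ∀ b, a1 < b → b < a2 → b ∈ I

/-!
Collapse the interval `I` back to the single point `i`. An element outside `I` compares with
every point of `I` in the same way, so any crossing of `S ∪ I` with another block (which avoids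
`I`) survives, after replacing its points in `I` by `i`, as a crossing of `S` with that block.
-/

section Crosses

variable {α : Type*} {lt : α → α → Prop} {A A' B : Set α}

theorem Crosses.symm (h : Crosses lt A B) : Crosses lt B A := by
  obtain ⟨a1, ha1, a2, ha2, b1, hb1, b2, hb2, h⟩ := h
  exact ⟨b1, hb1, b2, hb2, a1, ha1, a2, ha2, h.symm⟩

theorem Crosses.of_forall_exists_left
    (hA : ∀ a ∈ A, ∃ a' ∈ A', ∀ b ∈ B, (lt a b → lt a' b) ∧ (lt b a → lt b a'))
    (h : Crosses lt A B) : Crosses lt A' B := by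
  obtain ⟨a1, ha1, a2, ha2, b1, hb1, b2, hb2, h⟩ := h
  obtain ⟨a1', ha1', h1⟩ := hA a1 ha1
  obtain ⟨a2', ha2', h2⟩ := hA a2 ha2
  refine ⟨a1', ha1', a2', ha2', b1, hb1, b2, hb2, ?_⟩
  rcases h with ⟨h₁, h₂, h₃⟩ | ⟨h₁, h₂, h₃⟩
  · exact .inl ⟨(h1 b1 hb1).1 h₁, (h2 b1 hb1).2 h₂, (h2 b2 hb2).1 h₃⟩
  · exact .inr ⟨(h1 b1 hb1).2 h₁, (h1 b2 hb2).1 h₂, (h2 b2 hb2).2 h₃⟩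

end Crosses

theorem NonCrossingFam.replace {α : Type*} {lt : α → α → Prop} {π : Set (Set α)}
    (hnc : NonCrossingFam lt π) {S S' : Set α}
    (hS' : ∀ B ∈ π, B ≠ S → ¬ Crosses lt S' B) :
    NonCrossingFam lt ((π \ {S}) ∪ {S'}) := by
  rintro A (⟨hA, hAS⟩ | rfl) B (⟨hB, hBS⟩ | rfl) hAB hcr
  · exact hnc A hA B hB hAB hcr
  · exact hS' A hA hAS hcr.symm
  · exact hS' B hB hBS hcr
  · exact hAB rfl

section IsInterval

variable {α : Type*} [LinearOrder α] {I : Set α} {a b i : α}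

theorem IsInterval.mem_lt_of_lt (hI : IsInterval I) (ha : a ∈ I) (hi : i ∈ I) (hb : b ∉ I)
    (hab : a < b) : i < b := by
  refine lt_of_not_ge fun hbi => hb ?_
  rcases hbi.lt_or_eq with hbi | rfl
  · exact hI a ha i hi b hab hbi
  · exact hi

theorem IsInterval.lt_mem_of_lt (hI : IsInterval I) (ha : a ∈ I) (hi : i ∈ I) (hb : b ∉ I)
    (hba : b < a) : b < i := by
  refine lt_of_not_ge fun hib => hb ?_
  rcases hib.lt_or_eq with hib | rfl
  · exact hI i hi a ha b hib hba
  · exact hi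

theorem IsInterval.not_crosses_union (hI : IsInterval I) (hi : i ∈ I) {S B : Set α}
    (hiS : i ∈ S) (hBI : Disjoint B I) (hSB : ¬ Crosses (· < ·) S B) :
    ¬ Crosses (· < ·) (S ∪ I) B := by
  refine fun h => hSB (h.of_forall_exists_left ?_)
  rintro a ha
  by_cases haI : a ∈ I
  · refine ⟨i, hiS, fun b hb => ?_⟩
    have hbI : b ∉ I := hBI.notMem_of_mem_left hb
    exact ⟨hI.mem_lt_of_lt haI hi hbI, hI.lt_mem_of_lt haI hi hbI⟩
  · exact ⟨a, ha.resolve_right haI, fun _ _ => ⟨id, id⟩⟩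

end IsInterval

theorem IsPartitionOn.disjoint_of_ne {α : Type*} {I : Set α} {i : α} {π : Set (Set α)}
    (hπ : IsPartitionOn (Iᶜ ∪ {i}) π) {S B : Set α} (hS : S ∈ π) (hiS : i ∈ S)
    (hB : B ∈ π) (hBS : B ≠ S) : Disjoint B I := by
  refine Set.disjoint_left.2 fun b hb hbI => ?_
  have hbY : b ∈ Iᶜ ∪ {i} := hπ.2.2 ▸ Set.mem_sUnion_of_mem hb hB
  rcases hbY with hbI' | rfl
  · exact hbI' hbI
  · exact (hπ.2.1 B hB S hS hBS).notMem_of_mem_left hb hiS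

theorem blowup_nonCrossing_general {α : Type*} [LinearOrder α]
    (I : Set α) (hI : IsInterval I) (i : α) (hi : i ∈ I)
    (π : Set (Set α)) (hπ : IsPartitionOn (Iᶜ ∪ {i}) π)
    (hnc : NonCrossingFam (· < ·) π)
    (S : Set α) (hS : S ∈ π) (hiS : i ∈ S) :
    NonCrossingFam (· < ·) ((π \ {S}) ∪ {S ∪ I}) :=
  hnc.replace fun B hB hBS =>
    hI.not_crosses_union hi hiS (hπ.disjoint_of_ne hS hiS hB hBS) (hnc S hS B hB hBS.symm)

/-- Let `X` be a finite linearly ordered set, `I ⊆ X` an interval and `i ∈ I`.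
Let `π` be a partition of `(X ∖ I) ∪ {i}` that is non-crossing for the order
inherited from `X`. Then the partition of `X` obtained from `π` by replacing
the block `S` containing `i` with `S ∪ I` (leaving all other blocks unchanged)
is non-crossing for the order of `X`. -/
theorem blowup_nonCrossing {α : Type*} [Fintype α] [LinearOrder α]
    (I : Set α) (hI : IsInterval I) (i : α) (hi : i ∈ I)
    (π : Set (Set α)) (hπ : IsPartitionOn (Iᶜ ∪ {i}) π)
    (hnc : NonCrossingFam (· < ·) π)
    (S : Set α) (hS : S ∈ π) (hiS : i ∈ S) :
    NonCrossingFam (· < ·) ((π \ {S}) ∪ {S ∪ I}) :=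
  blowup_nonCrossing_general I hI i hi π hπ hnc S hS hiS
end

section
/- Let π be a partition of Fin n, let I ⊆ Fin n be an interval contained in some block S of π, and fix i ∈ I. Let X' = (Fin n ∖ I) ∪ {i} and let π − I be the partition of X' whose blocks are the blocks of π disjoint from I together with the block (S ∖ I) ∪ {i}. For a partition ρ of X', let ρ + I denote the partition of Fin n obtained from ρ by replacing the block containing i with its union with I. Suppose R is a finite set of partitions of X' and (a_ρ)_{ρ∈R} are rationals such that F_{X'}[π − I, χ'] = Σ_{ρ∈R} a_ρ · F_{X'}[ρ, χ'] for every partition χ' of X'. Then F_n[π, χ] = Σ_{ρ∈R} a_ρ · F_n[ρ + I, χ] for every partition χ of Fin n. -/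
noncomputable section

/-- The number of blocks of a partition of `β`, represented as a setoid. -/
def nBlocks {β : Type*} (s : Setoid β) : ℕ := Nat.card (Quotient s)

/-- Two partitions of a finite set are compatible if `|π| + |ρ| = m + |π ⊔ ρ|`,
where `m` is the size of the ground set. -/
def Compatible {β : Type*} (s t : Setoid β) : Prop :=
  nBlocks s + nBlocks t = Nat.card β + nBlocks (s ⊔ t)

open scoped Classical in
/-- The forest compatibility matrix `F_β`. -/
def FMat (β : Type*) : Matrix (Setoid β) (Setoid β) ℚ := fun s t =>
  if Compatible s t then 1 else 0

/-- The collapse map from the ground set to `Iᶜ ∪ {i}`, sending all of `I` to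
`i` and fixing all other elements.  Pulling a partition `ρ` of `Iᶜ ∪ {i}` back
along this map gives the blowup `ρ + I`: the block of `i` is replaced by its
union with `I`, all other blocks are unchanged. -/
noncomputable def collapse {α : Type*} (I : Set α) (i : α) (x : α) :
    ↥(Iᶜ ∪ {i} : Set α) := by
  classical
  exact if h : x ∈ I then ⟨i, Or.inr rfl⟩ else ⟨x, Or.inl h⟩

open scoped Classical in
lemma collapse_val {α : Type*} (I : Set α) (i : α) (x : α) :
    (collapse I i x : α) = if x ∈ I then i else x := by
  unfold collapse
  split_ifs with h
  · rfl
  · rfl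

/-- The auxiliary setoid `t` together with the identification of the classes of `a` and `b`. -/
private def spRel {β : Type*} (t : Setoid β) (a b : β) : Setoid β where
  r x y := t x y ∨ (t x a ∧ t b y) ∨ (t x b ∧ t a y)
  iseqv := {
    refl := fun x => Or.inl (t.iseqv.refl x)
    symm := by
      rintro x y (h | ⟨h1, h2⟩ | ⟨h1, h2⟩)
      · exact Or.inl (t.iseqv.symm h)
      · exact Or.inr (Or.inr ⟨t.iseqv.symm h2, t.iseqv.symm h1⟩)
      · exact Or.inr (Or.inl ⟨t.iseqv.symm h2, t.iseqv.symm h1⟩)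
    trans := by
      rintro x y z (h | ⟨h1, h2⟩ | ⟨h1, h2⟩) (g | ⟨g1, g2⟩ | ⟨g1, g2⟩)
      · exact Or.inl (t.iseqv.trans h g)
      · exact Or.inr (Or.inl ⟨t.iseqv.trans h g1, g2⟩)
      · exact Or.inr (Or.inr ⟨t.iseqv.trans h g1, g2⟩)
      · exact Or.inr (Or.inl ⟨h1, t.iseqv.trans h2 g⟩)
      · exact Or.inr (Or.inl ⟨h1, g2⟩)
      · exact Or.inl (t.iseqv.trans h1 g2)
      · exact Or.inr (Or.inr ⟨h1, t.iseqv.trans h2 g⟩)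
      · exact Or.inl (t.iseqv.trans h1 g2)
      · exact Or.inr (Or.inr ⟨h1, g2⟩)
  }

private lemma spRel_rel {β : Type*} (t : Setoid β) (a b x y : β) :
    spRel t a b x y ↔ (t x y ∨ (t x a ∧ t b y) ∨ (t x b ∧ t a y)) := Iff.rfl

/-- The setoid generated by the single pair `(a, b)`. -/
private def pairS {β : Type*} (a b : β) : Setoid β :=
  Relation.EqvGen.setoid (fun x y => x = a ∧ y = b)

private lemma pairS_rel {β : Type*} (a b : β) : pairS a b a b :=
  Relation.EqvGen.rel a b ⟨rfl, rfl⟩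

private lemma surj_mk {β : Type*} (s : Setoid β) :
    Function.Surjective (Quotient.mk s) := fun q => ⟨q.out, q.out_eq⟩

private lemma sup_pair_eq {β : Type*} (t : Setoid β) (a b : β) :
    t ⊔ pairS a b = spRel t a b := by
  apply le_antisymm
  · apply sup_le
    · intro x y hxy
      exact Or.inl hxy
    · apply Setoid.eqvGen_le
      rintro x y ⟨hx, hy⟩
      subst hx; subst hy
      exact Or.inr (Or.inl ⟨t.iseqv.refl _, t.iseqv.refl _⟩)
  · intro x y hxy
    have hab : (t ⊔ pairS a b) a b :=
      (le_sup_right : pairS a b ≤ t ⊔ pairS a b) (pairS_rel a b)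
    have hlt : t ≤ t ⊔ pairS a b := le_sup_left
    rcases hxy with h | ⟨h1, h2⟩ | ⟨h1, h2⟩
    · exact hlt h
    · exact (t ⊔ pairS a b).iseqv.trans (hlt h1)
        ((t ⊔ pairS a b).iseqv.trans hab (hlt h2))
    · exact (t ⊔ pairS a b).iseqv.trans (hlt h1)
        ((t ⊔ pairS a b).iseqv.trans ((t ⊔ pairS a b).iseqv.symm hab) (hlt h2))

private lemma nBlocks_le_card {β : Type*} [Finite β] (s : Setoid β) :
    nBlocks s ≤ Nat.card β :=
  Nat.card_le_card_of_surjective (Quotient.mk s) (surj_mk s)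

open scoped Classical in
private lemma nBlocks_le_sup_pair {β : Type*} [Finite β] (t : Setoid β) (a b : β) :
    nBlocks t ≤ nBlocks (t ⊔ pairS a b) + 1 := by
  set u := t ⊔ pairS a b with hu
  have hle : t ≤ u := le_sup_left
  let f : Quotient t → Quotient u ⊕ Unit := fun q =>
    Quotient.liftOn q
      (fun x => if t x b then Sum.inr Unit.unit else Sum.inl (Quotient.mk u x))
      (by
        intro x y hxy
        by_cases hb : t x b
        · rw [if_pos hb, if_pos (t.iseqv.trans (t.iseqv.symm hxy) hb)]
        · rw [if_neg hb, if_neg (fun hyb => hb (t.iseqv.trans hxy hyb))]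
          exact congrArg Sum.inl (Quotient.sound (hle hxy)))
  have hfinj : Function.Injective f := by
    intro q1 q2
    induction q1 using Quotient.ind
    induction q2 using Quotient.ind
    rename_i x y
    intro hf
    have hf' : (if t x b then Sum.inr Unit.unit else Sum.inl (Quotient.mk u x)) =
        (if t y b then Sum.inr Unit.unit else Sum.inl (Quotient.mk u y)) := hf
    by_cases hxb : t x b <;> by_cases hyb : t y b
    · exact Quotient.sound (t.iseqv.trans hxb (t.iseqv.symm hyb))
    · rw [if_pos hxb, if_neg hyb] at hf'; exact absurd hf' (by simp)
    · rw [if_neg hxb, if_pos hyb] at hf'; exact absurd hf' (by simp)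
    · rw [if_neg hxb, if_neg hyb] at hf'
      have huxy : u x y := Quotient.exact (Sum.inl.inj hf')
      have hxy : spRel t a b x y := by
        rw [← sup_pair_eq t a b]
        exact huxy
      rcases hxy with h | ⟨h1, h2⟩ | ⟨h1, h2⟩
      · exact Quotient.sound h
      · exact absurd (t.iseqv.symm h2) hyb
      · exact absurd h1 hxb
  calc nBlocks t ≤ Nat.card (Quotient u ⊕ Unit) :=
        Nat.card_le_card_of_injective f hfinj
    _ = nBlocks u + 1 := by
        have hp : Nat.card Unit = 1 := Nat.card_unique
        rw [Nat.card_sum, hp]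
        rfl

private lemma nBlocks_bot {β : Type*} : nBlocks (⊥ : Setoid β) = Nat.card β := by
  refine (Nat.card_eq_of_bijective (Quotient.mk ⊥)
    ⟨fun x y hxy => ?_, surj_mk _⟩).symm
  have h2 : ⇑(⊥ : Setoid β) x y := Quotient.exact hxy
  rwa [Setoid.bot_def] at h2

/-- The key inequality: `|r| + |s| ≤ m + |r ⊔ s|`. -/
private lemma key_ineq {β : Type*} [Finite β] (r s : Setoid β) :
    nBlocks r + nBlocks s ≤ Nat.card β + nBlocks (r ⊔ s) := by
  classical
  have H : ∀ k : ℕ, ∀ s r : Setoid β, Nat.card β - nBlocks s ≤ k →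
      nBlocks r + nBlocks s ≤ Nat.card β + nBlocks (r ⊔ s) := by
    intro k
    induction k with
    | zero =>
      intro s r hk
      have h1 : nBlocks s ≤ Nat.card β := nBlocks_le_card s
      have h2 : nBlocks s = Nat.card β := by omega
      have hbot : s = ⊥ := by
        have hsur : Function.Surjective (Quotient.mk s) := surj_mk s
        have hbij := (Nat.bijective_iff_surjective_and_card (Quotient.mk s)).mpr
          ⟨hsur, h2.symm⟩
        refine le_antisymm ?_ bot_le
        intro x y hxy
        have hxy2 : x = y := hbij.1 (Quotient.sound hxy)
        rw [Setoid.bot_def]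
        exact hxy2
      subst hbot
      rw [sup_bot_eq, nBlocks_bot]
      omega
    | succ k ih =>
      intro s r hk
      by_cases hsb : ∃ p q : β, p ≠ q ∧ s p q
      · obtain ⟨p, q, hpq, hspq⟩ := hsb
        set s' : Setoid β := Setoid.ker (fun x => (Quotient.mk s x, x = q)) with hs'
        have hs'_rel : ∀ x y, s' x y ↔ (s x y ∧ (x = q ↔ y = q)) := by
          intro x y
          constructor
          · intro hxy
            have h' : (Quotient.mk s x, x = q) = (Quotient.mk s y, y = q) := hxy
            exact ⟨Quotient.exact (congrArg Prod.fst h'),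
              iff_of_eq (congrArg Prod.snd h')⟩
          · rintro ⟨h1, h2⟩
            show (Quotient.mk s x, x = q) = (Quotient.mk s y, y = q)
            rw [Quotient.sound h1, propext h2]
        have hle : s' ≤ s := fun x y hxy => ((hs'_rel x y).1 hxy).1
        have hdecomp : s' ⊔ pairS p q = s := by
          apply le_antisymm
          · apply sup_le hle
            apply Setoid.eqvGen_le
            rintro x y ⟨hx, hy⟩
            subst hx; subst hy
            exact hspq
          · intro x y hxy
            set u := s' ⊔ pairS p q with hudef
            have hupq : u p q :=
              (le_sup_right : pairS p q ≤ s' ⊔ pairS p q) (pairS_rel p q)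
            have hsu : s' ≤ u := le_sup_left
            have key : ∀ z, s z q → u z q := by
              intro z hz
              by_cases hzq : z = q
              · subst hzq; exact u.iseqv.refl z
              · have h1 : s' z p := (hs'_rel z p).2
                  ⟨s.iseqv.trans hz (s.iseqv.symm hspq),
                   by simp [hzq, hpq]⟩
                exact u.iseqv.trans (hsu h1) hupq
            by_cases hxq : x = q <;> by_cases hyq : y = q
            · subst hxq; subst hyq; exact u.iseqv.refl _
            · subst hxq
              exact u.iseqv.symm (key y (s.iseqv.symm hxy))
            · subst hyq
              exact key x hxy
            · exact hsu ((hs'_rel x y).2 ⟨hxy, by simp [hxq, hyq]⟩)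
        -- s has strictly fewer blocks than s'
        have hcard_lt : nBlocks s < nBlocks s' := by
          let g : Quotient s' → Quotient s := fun qq =>
            Quotient.liftOn qq (Quotient.mk s) (fun x y hxy => Quotient.sound (hle hxy))
          have hg : Function.Surjective g := by
            intro qq
            refine ⟨Quotient.mk s' qq.out, ?_⟩
            show Quotient.mk s qq.out = qq
            exact qq.out_eq
          have hle2 : nBlocks s ≤ nBlocks s' := Nat.card_le_card_of_surjective g hg
          rcases eq_or_lt_of_le hle2 with heq | hlt
          · exfalso
            have hbij := (Nat.bijective_iff_surjective_and_card g).mpr ⟨hg, heq.symm⟩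
            have hmk : Quotient.mk s' p = Quotient.mk s' q := by
              apply hbij.1
              show Quotient.mk s p = Quotient.mk s q
              exact Quotient.sound hspq
            have : s' p q := Quotient.exact hmk
            exact hpq (((hs'_rel p q).1 this).2.2 rfl)
          · exact hlt
        have hA := nBlocks_le_sup_pair s' p q
        rw [hdecomp] at hA
        have hs'card : nBlocks s' ≤ Nat.card β := nBlocks_le_card s'
        have hm : Nat.card β - nBlocks s' ≤ k := by omega
        have IH := ih s' r hm
        have hA2 := nBlocks_le_sup_pair (r ⊔ s') p q
        have hassoc : (r ⊔ s') ⊔ pairS p q = r ⊔ s := by rw [sup_assoc, hdecomp]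
        rw [hassoc] at hA2
        omega
      · push_neg at hsb
        have hbot : s = ⊥ := by
          refine le_antisymm ?_ bot_le
          intro x y hxy
          rw [Setoid.bot_def]
          by_contra hne
          exact hsb x y hne hxy
        subst hbot
        rw [sup_bot_eq, nBlocks_bot]
        have := nBlocks_le_card r
        omega
  exact H (Nat.card β) s r (Nat.sub_le _ _)

private lemma nBlocks_comap {α γ : Type*} (f : α → γ) (g : γ → α)
    (hfg : ∀ y, f (g y) = y) (ρ : Setoid γ) :
    nBlocks (Setoid.comap f ρ) = nBlocks ρ := by
  apply Nat.card_eq_of_bijective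
    (fun q => Quotient.liftOn q (fun x => Quotient.mk ρ (f x))
      (fun x y hxy => Quotient.sound hxy))
  constructor
  · intro q1 q2
    induction q1 using Quotient.ind
    induction q2 using Quotient.ind
    rename_i x y
    intro hf
    have hf' : Quotient.mk ρ (f x) = Quotient.mk ρ (f y) := hf
    have hr : ρ (f x) (f y) := Quotient.exact hf'
    exact Quotient.sound hr
  · intro q
    refine ⟨Quotient.mk _ (g q.out), ?_⟩
    show Quotient.mk ρ (f (g q.out)) = q
    rw [hfg]
    exact q.out_eq

private lemma comap_sup_eq {α γ : Type*} (f : α → γ) (g : γ → α)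
    (hfg : ∀ y, f (g y) = y) (ρ₁ ρ₂ : Setoid γ) :
    Setoid.comap f (ρ₁ ⊔ ρ₂) = Setoid.comap f ρ₁ ⊔ Setoid.comap f ρ₂ := by
  apply le_antisymm
  · intro x y hxy
    have hxy' : (ρ₁ ⊔ ρ₂) (f x) (f y) := hxy
    rw [Setoid.sup_eq_eqvGen] at hxy'
    set u := Setoid.comap f ρ₁ ⊔ Setoid.comap f ρ₂ with hu
    have hl : Setoid.comap f ρ₁ ≤ u := le_sup_left
    have hr : Setoid.comap f ρ₂ ≤ u := le_sup_right
    have main : ∀ p q : γ, Relation.EqvGen (fun p q => ρ₁ p q ∨ ρ₂ p q) p q →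
        u (g p) (g q) := by
      intro p q hpq
      induction hpq with
      | rel p q hrel =>
        rcases hrel with hrel | hrel
        · refine hl (show ρ₁ (f (g p)) (f (g q)) from ?_)
          rw [hfg, hfg]; exact hrel
        · refine hr (show ρ₂ (f (g p)) (f (g q)) from ?_)
          rw [hfg, hfg]; exact hrel
      | refl p => exact u.iseqv.refl _
      | symm p q _ ihh => exact u.iseqv.symm ihh
      | trans p q r _ _ ih1 ih2 => exact u.iseqv.trans ih1 ih2
    have hmain : Relation.EqvGen (fun p q => ρ₁ p q ∨ ρ₂ p q) (f x) (f y) := hxy'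
    have h1 : u x (g (f x)) := by
      refine hl (show ρ₁ (f x) (f (g (f x))) from ?_)
      rw [hfg]
    have h2 : u (g (f y)) y := by
      refine hl (show ρ₁ (f (g (f y))) (f y) from ?_)
      rw [hfg]
    exact u.iseqv.trans h1 (u.iseqv.trans (main _ _ hmain) h2)
  · apply sup_le
    · intro x y hxy
      exact (le_sup_left : ρ₁ ≤ ρ₁ ⊔ ρ₂) hxy
    · intro x y hxy
      exact (le_sup_right : ρ₂ ≤ ρ₁ ⊔ ρ₂) hxy

/-- Lemma BlockUp. -/
theorem blockUp (n : ℕ) (π : Setoid (Fin n)) (I : Set (Fin n)) (hI : IsInterval I)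
    (i : Fin n) (hiI : i ∈ I) (hblock : ∀ a ∈ I, ∀ b ∈ I, π a b)
    (R : Finset (Setoid ↥(Iᶜ ∪ {i} : Set (Fin n))))
    (a : Setoid ↥(Iᶜ ∪ {i} : Set (Fin n)) → ℚ)
    (h : ∀ χ' : Setoid ↥(Iᶜ ∪ {i} : Set (Fin n)),
      FMat ↥(Iᶜ ∪ {i} : Set (Fin n)) (Setoid.comap Subtype.val π) χ' =
        ∑ ρ ∈ R, a ρ * FMat ↥(Iᶜ ∪ {i} : Set (Fin n)) ρ χ') :
    ∀ χ : Setoid (Fin n),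
      FMat (Fin n) π χ =
        ∑ ρ ∈ R, a ρ * FMat (Fin n) (Setoid.comap (collapse I i) ρ) χ := by
  classical
  intro χ
  set X' := ↥(Iᶜ ∪ {i} : Set (Fin n)) with hX'
  set c : Fin n → X' := collapse I i with hc
  -- basic facts about c
  have hcv : ∀ x : X', c (Subtype.val x) = x := by
    intro x
    apply Subtype.ext
    rw [hc, collapse_val]
    rcases x.2 with hx | hx
    · rw [if_neg hx]
    · have hxi : (x : Fin n) = i := hx
      have hxI : (x : Fin n) ∈ I := by rw [hxi]; exact hiI
      rw [if_pos hxI, hxi]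
  have hcI : ∀ z : Fin n, z ∈ I → (c z : Fin n) = i := by
    intro z hz; rw [hc, collapse_val, if_pos hz]
  have hcnI : ∀ z : Fin n, z ∉ I → (c z : Fin n) = z := by
    intro z hz; rw [hc, collapse_val, if_neg hz]
  -- restriction/extension facts
  have fact3 : ∀ σ : Setoid (Fin n), (∀ p ∈ I, ∀ q ∈ I, σ p q) →
      Setoid.comap c (Setoid.comap Subtype.val σ) = σ := by
    intro σ hb
    refine Setoid.ext fun x y => ?_
    have key : ∀ z : Fin n, σ z (Subtype.val (c z)) := by
      intro z
      by_cases hz : z ∈ I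
      · rw [show Subtype.val (c z) = i from hcI z hz]
        exact hb z hz i hiI
      · rw [show Subtype.val (c z) = z from hcnI z hz]
    constructor
    · intro hxy
      have hxy' : σ (Subtype.val (c x)) (Subtype.val (c y)) := hxy
      exact σ.iseqv.trans (key x) (σ.iseqv.trans hxy' (σ.iseqv.symm (key y)))
    · intro hxy
      show σ (Subtype.val (c x)) (Subtype.val (c y))
      exact σ.iseqv.trans (σ.iseqv.symm (key x)) (σ.iseqv.trans hxy (key y))
  have fact2 : ∀ ρ : Setoid X',
      Setoid.comap Subtype.val (Setoid.comap c ρ) = ρ := by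
    intro ρ
    refine Setoid.ext fun x y => ?_
    show ρ (c (Subtype.val x)) (c (Subtype.val y)) ↔ ρ x y
    rw [hcv, hcv]
  have hθ_le : ∀ σ : Setoid (Fin n), (∀ p ∈ I, ∀ q ∈ I, σ p q) →
      Setoid.ker c ≤ σ := by
    intro σ hb x y hxy
    have hxy' : c x = c y := hxy
    by_cases hx : x ∈ I <;> by_cases hy : y ∈ I
    · exact hb x hx y hy
    · exfalso
      have := congrArg Subtype.val hxy'
      rw [hcI x hx, hcnI y hy] at this
      exact hy (this ▸ hiI)
    · exfalso
      have := congrArg Subtype.val hxy'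
      rw [hcnI x hx, hcI y hy] at this
      rw [this] at hx
      exact hx hiI
    · have hxyeq : x = y := by
        have := congrArg Subtype.val hxy'
        rwa [hcnI x hx, hcnI y hy] at this
      subst hxyeq
      exact σ.iseqv.refl x
  have hbc : ∀ ρ : Setoid X', ∀ p ∈ I, ∀ q ∈ I, Setoid.comap c ρ p q := by
    intro ρ p hp q hq
    show ρ (c p) (c q)
    have hceq : c p = c q := Subtype.ext (by rw [hcI p hp, hcI q hq])
    rw [hceq]
  -- setup
  set θ : Setoid (Fin n) := Setoid.ker c with hθ
  set χb : Setoid (Fin n) := χ ⊔ θ with hχb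
  have hbχb : ∀ p ∈ I, ∀ q ∈ I, χb p q := by
    intro p hp q hq
    have : θ p q := Subtype.ext (by rw [hcI p hp, hcI q hq])
    exact (le_sup_right : θ ≤ χ ⊔ θ) this
  set χ' : Setoid X' := Setoid.comap Subtype.val χb with hχ'
  have hχb_eq : Setoid.comap c χ' = χb := fact3 χb hbχb
  have eχ' : nBlocks χb = nBlocks χ' := by
    have e := nBlocks_comap c Subtype.val hcv χ'
    rw [hχb_eq] at e
    exact e
  have hθcard : nBlocks θ = Nat.card X' := by
    have hθbot : θ = Setoid.comap c (⊥ : Setoid X') := by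
      refine Setoid.ext fun x y => ?_
      show c x = c y ↔ ⇑(⊥ : Setoid X') (c x) (c y)
      rw [Setoid.bot_def]
    rw [hθbot, nBlocks_comap c Subtype.val hcv, nBlocks_bot]
  -- the key pointwise lemma
  have L : ∀ σ : Setoid (Fin n), (∀ p ∈ I, ∀ q ∈ I, σ p q) →
      FMat (Fin n) σ χ =
        (if Nat.card (Fin n) + nBlocks χb = Nat.card X' + nBlocks χ then (1 : ℚ) else 0) *
          FMat X' (Setoid.comap Subtype.val σ) χ' := by
    intro σ hb
    have hσ_eq : Setoid.comap c (Setoid.comap Subtype.val σ) = σ := fact3 σ hb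
    have e1 : nBlocks σ = nBlocks (Setoid.comap (Subtype.val : X' → Fin n) σ) := by
      have e := nBlocks_comap c Subtype.val hcv (Setoid.comap Subtype.val σ)
      rw [hσ_eq] at e
      exact e
    have e2 : σ ⊔ χb = σ ⊔ χ := by
      rw [hχb, sup_comm χ θ, ← sup_assoc, sup_eq_left.mpr (hθ_le σ hb)]
    have ej : σ ⊔ χ = Setoid.comap c (Setoid.comap Subtype.val σ ⊔ χ') := by
      rw [comap_sup_eq c Subtype.val hcv, hσ_eq, hχb_eq, e2]
    have e4 : nBlocks (σ ⊔ χ) = nBlocks (Setoid.comap Subtype.val σ ⊔ χ') := by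
      rw [ej, nBlocks_comap c Subtype.val hcv]
    have hB : Compatible (Setoid.comap Subtype.val σ) χ' ↔
        nBlocks σ + nBlocks χb = Nat.card X' + nBlocks (σ ⊔ χ) := by
      unfold Compatible
      rw [← e1, ← eχ', ← e4]
    have h1 : nBlocks σ + nBlocks χb ≤ Nat.card X' + nBlocks (σ ⊔ χ) := by
      have := key_ineq (Setoid.comap Subtype.val σ) χ'
      rwa [← e1, ← eχ', ← e4] at this
    have h2 : nBlocks χ + Nat.card X' ≤ Nat.card (Fin n) + nBlocks χb := by
      have := key_ineq χ θ
      rwa [hθcard, ← hχb] at this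
    simp only [FMat]
    by_cases hcnd : Nat.card (Fin n) + nBlocks χb = Nat.card X' + nBlocks χ
    · rw [if_pos hcnd, one_mul]
      by_cases hcompat : Compatible σ χ
      · have hAeq : nBlocks σ + nBlocks χ = Nat.card (Fin n) + nBlocks (σ ⊔ χ) := hcompat
        rw [if_pos hcompat, if_pos (hB.mpr (by omega))]
      · have hnB : ¬ Compatible (Setoid.comap Subtype.val σ) χ' := by
          intro hB'
          have hBeq := hB.mp hB'
          exact hcompat (show nBlocks σ + nBlocks χ =
            Nat.card (Fin n) + nBlocks (σ ⊔ χ) by omega)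
        rw [if_neg hcompat, if_neg hnB]
    · have hnA : ¬ Compatible σ χ := by
        intro hcompat
        have hAeq : nBlocks σ + nBlocks χ = Nat.card (Fin n) + nBlocks (σ ⊔ χ) := hcompat
        omega
      rw [if_neg hcnd, if_neg hnA, zero_mul]
  -- conclude
  have Lπ := L π hblock
  rw [h χ'] at Lπ
  rw [Lπ, Finset.mul_sum]
  apply Finset.sum_congr rfl
  intro ρ hρ
  rw [L (Setoid.comap c ρ) (hbc ρ), fact2 ρ]
  ring

end
end

section
/- Let G be a finite simple graph with an edge uv, and let G' be the graph obtained from G by subdividing uv, i.e. deleting the edge uv and adding a new vertex w together with the edges uw and wv. Then the cutwidth of G' is at most the cutwidth of G. -/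
/-!
Take an optimal ordering of `G`, with `u` before `v` say, and insert the new vertex `w` right
after `u`. A cut of the new ordering is crossed by the old edges crossing the corresponding
cut of the old ordering, except that `uv` is replaced by whichever of `uw`, `wv` crosses it
(at most one does, as `w` sits next to `u`). Hence no cut gets wider.
-/

noncomputable section

/-- The cutwidth of a finite simple graph: the minimum over all linear orderings
(cut decompositions) `f : V ≃ Fin |V|` of the vertex set of the maximum number
of edges crossing a cut, where an edge `{u, v}` crosses the `i`-th cut if
`f u ≤ i < f v`. -/
def cutwidth {V : Type*} [Finite V] (G : SimpleGraph V) : ℕ :=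
  sInf {w | ∃ f : V ≃ Fin (Nat.card V), ∀ i : ℕ,
    {e | e ∈ G.edgeSet ∧ ∃ u v, e = s(u, v) ∧ (f u : ℕ) ≤ i ∧ i < (f v : ℕ)}.ncard ≤ w}

/-- The graph obtained from `G` by subdividing the edge `uv`: delete the edge
`uv` and add a new vertex `w = Sum.inr ()` together with the edges `uw`, `wv`. -/
def subdivide {V : Type*} (G : SimpleGraph V) (u v : V) : SimpleGraph (V ⊕ Unit) :=
  SimpleGraph.fromEdgeSet
    ((Sym2.map Sum.inl '' (G.edgeSet \ {s(u, v)})) ∪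
      {s(Sum.inl u, Sum.inr ()), s(Sum.inl v, Sum.inr ())})

open Sum

def crossingEdges {V : Type*} (G : SimpleGraph V) (f : V → ℕ) (i : ℕ) : Set (Sym2 V) :=
  {e | e ∈ G.edgeSet ∧ ∃ a b, e = s(a, b) ∧ f a ≤ i ∧ i < f b}

theorem mk_mem_crossingEdges {V : Type*} {G : SimpleGraph V} {f : V → ℕ} {i : ℕ} {x y : V} :
    s(x, y) ∈ crossingEdges G f i ↔
      G.Adj x y ∧ (f x ≤ i ∧ i < f y ∨ f y ≤ i ∧ i < f x) := by
  simp only [crossingEdges, Set.mem_ofPred_eq, SimpleGraph.mem_edgeSet, Sym2.eq_iff]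
  constructor
  · rintro ⟨hxy, a, b, (⟨rfl, rfl⟩ | ⟨rfl, rfl⟩), hab⟩ <;> tauto
  · rintro ⟨hxy, h | h⟩
    · exact ⟨hxy, x, y, Or.inl ⟨rfl, rfl⟩, h⟩
    · exact ⟨hxy, y, x, Or.inr ⟨rfl, rfl⟩, h⟩

section Cutwidth

variable {V : Type*} [Finite V] (G : SimpleGraph V)

theorem cutwidth_le {w : ℕ} (f : V ≃ Fin (Nat.card V))
    (hf : ∀ i, (crossingEdges G (f ·) i).ncard ≤ w) : cutwidth G ≤ w :=
  Nat.sInf_le ⟨f, hf⟩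

theorem exists_crossingEdges_ncard_le_cutwidth :
    ∃ f : V ≃ Fin (Nat.card V), ∀ i, (crossingEdges G (f ·) i).ncard ≤ cutwidth G := by
  refine Nat.sInf_mem (s := {w | ∃ f : V ≃ Fin (Nat.card V), ∀ i,
    (crossingEdges G (f ·) i).ncard ≤ w}) ⟨Nat.card (Sym2 V), Finite.equivFin V, fun i => ?_⟩
  exact (Set.ncard_le_ncard (Set.subset_univ _)).trans_eq (Set.ncard_univ _)

end Cutwidth

section Subdivide

variable {V : Type*} (G : SimpleGraph V) (u v : V)

theorem subdivide_comm : subdivide G u v = subdivide G v u := by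
  rw [subdivide, subdivide, Sym2.eq_swap, Set.pair_comm]

variable {G u v}

theorem subdivide_adj_inl_inl {x y : V} :
    (subdivide G u v).Adj (inl x) (inl y) ↔ G.Adj x y ∧ s(x, y) ≠ s(u, v) := by
  rw [subdivide, SimpleGraph.fromEdgeSet_adj, Set.mem_union, show s(inl x, inl y) =
    Sym2.map (inl : V → V ⊕ Unit) s(x, y) from rfl,
    (Sym2.map.injective inl_injective).mem_set_image]
  simp only [Set.mem_sdiff, SimpleGraph.mem_edgeSet, Set.mem_singleton_iff, Sym2.map_mk,
    Set.mem_insert_iff, Sym2.eq_iff, reduceCtorEq, and_false, false_and, or_self, or_false,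
    ne_eq, inl_injective.eq_iff]
  exact ⟨fun ⟨h, _⟩ => h, fun h => ⟨h, h.1.ne⟩⟩

theorem subdivide_adj_inl_inr {x : V} :
    (subdivide G u v).Adj (inl x) (inr ()) ↔ x = u ∨ x = v := by
  have (e : Sym2 V) : Sym2.map inl e ≠ s(inl x, inr ()) := fun he => by
    simpa using congrArg (inr () ∈ ·) he
  simp [subdivide, this]

open scoped Classical in
/-- Edges of `G` as edges of `subdivide G u v`, where `uv` becomes its half `cw`. -/
def subdivideLift (u v c : V) (e : Sym2 V) : Sym2 (V ⊕ Unit) :=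
  if e = s(u, v) then s(inl c, inr ()) else e.map inl

end Subdivide

section Crossing

variable {V : Type*} {G : SimpleGraph V} {u v : V}

theorem subdivideLift_of_ne {c : V} {e : Sym2 V} (he : e ≠ s(u, v)) :
    subdivideLift u v c e = e.map inl :=
  if_neg he

theorem subdivideLift_self (c : V) : subdivideLift u v c s(u, v) = s(inl c, inr ()) :=
  if_pos rfl

theorem crossingEdges_subdivide_subset (huv : G.Adj u v) {f : V → ℕ} {g : V ⊕ Unit → ℕ}
    (hf : f u < f v) (hg_inl : ∀ x, g (inl x) = if f x ≤ f u then f x else f x + 1)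
    (hg_inr : g (inr ()) = f u + 1) (i : ℕ) :
    crossingEdges (subdivide G u v) g i ⊆
      subdivideLift u v (if i ≤ f u then u else v) ''
        crossingEdges G f (if i ≤ f u then i else i - 1) := by
  have new_edge (x : V) (hx : x = u ∨ x = v)
      (hcross : g (inl x) ≤ i ∧ i < g (inr ()) ∨ g (inr ()) ≤ i ∧ i < g (inl x)) :
      s(inl x, inr ()) ∈ subdivideLift u v (if i ≤ f u then u else v) ''
        crossingEdges G f (if i ≤ f u then i else i - 1) := by
    refine ⟨s(u, v), mk_mem_crossingEdges.2 ⟨huv, ?_⟩, ?_⟩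
    all_goals
      rcases hx with rfl | rfl <;> simp only [hg_inl, hg_inr, subdivideLift_self] at hcross ⊢ <;>
        split_ifs at hcross ⊢ <;> first | rfl | omega
  intro e he
  induction e using Sym2.ind with | _ a b => ?_
  obtain ⟨hadj, hcross⟩ := mk_mem_crossingEdges.1 he
  rcases a with x | ⟨⟩ <;> rcases b with y | ⟨⟩
  · obtain ⟨hxy, hne⟩ := subdivide_adj_inl_inl.1 hadj
    refine ⟨s(x, y), mk_mem_crossingEdges.2 ⟨hxy, ?_⟩, subdivideLift_of_ne hne⟩
    rw [hg_inl, hg_inl] at hcross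
    split_ifs at hcross ⊢ <;> omega
  · exact new_edge x (subdivide_adj_inl_inr.1 hadj) hcross
  · rw [Sym2.eq_swap]
    exact new_edge y (subdivide_adj_inl_inr.1 hadj.symm) hcross.symm
  · exact absurd hadj (SimpleGraph.irrefl _)

end Crossing

section Numbering

variable {α : Type*} {n : ℕ} (f : α ≃ Fin n)

/-- The new element gets the number `p`; the others keep their relative order. -/
def extendNumbering (p : Fin (n + 1)) : α ⊕ Unit ≃ Fin (n + 1) :=
  (Equiv.optionEquivSumPUnit α).symm.trans (f.optionCongr.trans (finSuccEquiv' p).symm)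

theorem val_extendNumbering_succ_inl (a x : α) :
    (extendNumbering f (f a).succ (inl x) : ℕ) =
      if (f x : ℕ) ≤ f a then (f x : ℕ) else f x + 1 := by
  simp only [extendNumbering, Equiv.trans_apply, Equiv.optionEquivSumPUnit_symm_inl,
    Equiv.optionCongr_apply, Option.map_some, finSuccEquiv'_symm_some]
  split_ifs with h
  · rw [Fin.succAbove_succ_of_le _ _ h, Fin.val_castSucc]
  · rw [Fin.succAbove_succ_of_lt _ _ (not_le.1 h), Fin.val_succ]

theorem val_extendNumbering_succ_inr (a : α) :
    (extendNumbering f (f a).succ (inr ()) : ℕ) = f a + 1 := by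
  simp [extendNumbering]

end Numbering

theorem cutwidth_subdivide_le_of_lt {V : Type*} [Finite V] {G : SimpleGraph V} {u v : V}
    (huv : G.Adj u v) {w : ℕ} (f : V ≃ Fin (Nat.card V))
    (hf : ∀ i, (crossingEdges G (f ·) i).ncard ≤ w) (hlt : f u < f v) :
    cutwidth (subdivide G u v) ≤ w := by
  have hcard : Nat.card V + 1 = Nat.card (V ⊕ Unit) := by simp [Nat.card_sum]
  refine cutwidth_le _ ((extendNumbering f (f u).succ).trans (finCongr hcard)) fun i => ?_
  calc _ ≤ (subdivideLift u v (if i ≤ f u then u else v) ''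
          crossingEdges G (f ·) (if i ≤ f u then i else i - 1)).ncard :=
        Set.ncard_le_ncard (crossingEdges_subdivide_subset huv hlt
          (val_extendNumbering_succ_inl f u) (val_extendNumbering_succ_inr f u) i)
    _ ≤ _ := Set.ncard_image_le (Set.toFinite _)
    _ ≤ w := hf _

/-- Subdividing an edge does not increase the cutwidth. -/
theorem cutwidth_subdivide_le {V : Type*} [Finite V] (G : SimpleGraph V)
    (u v : V) (huv : G.Adj u v) :
    cutwidth (subdivide G u v) ≤ cutwidth G := by
  obtain ⟨f, hf⟩ := exists_crossingEdges_ncard_le_cutwidth G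
  rcases lt_or_gt_of_ne (f.injective.ne huv.ne) with hlt | hgt
  · exact cutwidth_subdivide_le_of_lt huv f hf hlt
  · rw [subdivide_comm]
    exact cutwidth_subdivide_le_of_lt huv.symm f hf hgt
end
end

section
/- For every finite simple graph G and every integer k ≥ 1, the cutwidth of the k-stretch satisfies ctw(^kG) ≤ ctw(G). -/
noncomputable section

/-- The `j`-th vertex (for `0 ≤ j ≤ k`) on the path of length `k` replacing the
edge `e = {u, v}` (with `u ≤ v`) in the `k`-stretch: the endpoints `u`, `v` for
`j = 0`, `j = k`, and the `k - 1` new internal vertices in between. -/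
def stretchNode {V : Type*} [LinearOrder V] (G : SimpleGraph V) (k : ℕ)
    (e : G.edgeSet) (j : ℕ) : V ⊕ (G.edgeSet × Fin (k - 1)) :=
  if h0 : j = 0 then Sum.inl (e : Sym2 V).inf
  else if h : j < k then Sum.inr (e, ⟨j - 1, by omega⟩)
  else Sum.inl (e : Sym2 V).sup

/-- The `k`-stretch of `G`: every edge of `G` is replaced by a path with `k`
edges through `k - 1` new internal vertices. -/
def stretch {V : Type*} [LinearOrder V] (G : SimpleGraph V) (k : ℕ) :
    SimpleGraph (V ⊕ (G.edgeSet × Fin (k - 1))) :=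
  SimpleGraph.fromEdgeSet
    {p | ∃ (e : G.edgeSet) (j : ℕ), j < k ∧
      p = s(stretchNode G k e j, stretchNode G k e (j + 1))}

/-
Fix an optimal ordering `f` of `G` and order the stretch lexicographically: every vertex of `G`
keeps its place, and the inner vertices of an edge are put right after its `f`-earlier endpoint,
in the order of the path. Along each subdivided edge the positions then increase, so the path of
an edge of `G` crosses a cut of the stretch at most once, and only if that edge crosses the cut
of `G` just after the vertex of `G` whose block contains the cut.
-/

open Function

lemma Set.ncard_le_ncard_of_forall_subsingleton {α β : Type*} {s : Set α} {t : Set β}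
    (r : α → β → Prop) (ht : t.Finite) (hs : ∀ a ∈ s, ∃ b ∈ t, r a b)
    (hst : ∀ b ∈ t, {a | a ∈ s ∧ r a b}.Subsingleton) : s.ncard ≤ t.ncard := by
  classical
  obtain hsi | hsf := s.finite_or_infinite.symm
  · simp [hsi.ncard]
  lift s to Finset α using hsf
  lift t to Finset β using ht
  simpa using Finset.card_le_card_of_forall_subsingleton r (by simpa using hs) (by simpa using hst)

lemma Monotone.eq_of_le_of_lt_succ {α : Type*} [Preorder α] {x : ℕ → α} (hx : Monotone x)
    {a : α} {i j : ℕ} (hi : x i ≤ a) (hi' : a < x (i + 1)) (hj : x j ≤ a) (hj' : a < x (j + 1)) :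
    i = j := by
  by_contra hne
  rcases Nat.lt_or_gt_of_ne hne with h | h
  · exact (hx h).not_gt (hj.trans_lt hi')
  · exact (hx h).not_gt (hi.trans_lt hj')

lemma Sym2.inf_map {α β : Type*} [LinearOrder α] [LinearOrder β] (f : α → β) (z : Sym2 α) :
    (z.map f).inf = min (f z.inf) (f z.sup) := by
  induction z using Sym2.ind with
  | _ a b => rcases le_total a b with h | h <;> simp [h, min_comm]

lemma Sym2.sup_map {α β : Type*} [LinearOrder α] [LinearOrder β] (f : α → β) (z : Sym2 α) :
    (z.map f).sup = max (f z.inf) (f z.sup) := by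
  induction z using Sym2.ind with
  | _ a b => rcases le_total a b with h | h <;> simp [h, max_comm]

lemma Sym2.inf_lt_sup {α : Type*} [LinearOrder α] {z : Sym2 α} (hz : ¬ z.IsDiag) :
    z.inf < z.sup := by
  induction z using Sym2.ind with
  | _ a b => simpa [eq_comm] using hz

namespace SimpleGraph

variable {W : Type*}

def edgesLeaving (H : SimpleGraph W) (S : Set W) : Set (Sym2 W) :=
  {e | e ∈ H.edgeSet ∧ ∃ u v, e = s(u, v) ∧ u ∈ S ∧ v ∉ S}

lemma edgesLeaving_univ (H : SimpleGraph W) : H.edgesLeaving Set.univ = ∅ := by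
  simp [edgesLeaving]

lemma mem_edgesLeaving_of_inf_map_le_of_lt_sup_map {V β : Type*} [LinearOrder β]
    (G : SimpleGraph V) {f : V → β} {e : Sym2 V} {i : β} (he : e ∈ G.edgeSet)
    (h₁ : (e.map f).inf ≤ i) (h₂ : i < (e.map f).sup) : e ∈ G.edgesLeaving {v | f v ≤ i} := by
  induction e using Sym2.ind with
  | _ u v =>
    simp only [Sym2.map_mk, Sym2.inf_mk, Sym2.sup_mk] at h₁ h₂
    rcases le_total (f u) (f v) with h | h
    · exact ⟨he, u, v, rfl, by simpa [h] using h₁, by simpa [h] using h₂⟩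
    · exact ⟨he, v, u, Sym2.eq_swap, by simpa [h] using h₁, by simpa [h] using h₂⟩

lemma ncard_edgesLeaving_le_of_monotone_tracks {α β : Type*} [LinearOrder α] [Finite β]
    {H : SimpleGraph W} (key : W → α) (track : β → ℕ → W)
    (hmono : ∀ b, Monotone (key ∘ track b))
    (hcover : ∀ p ∈ H.edgeSet, ∃ b j, p = s(track b j, track b (j + 1))) (a : α) :
    (H.edgesLeaving {w | key w ≤ a}).ncard ≤
      {b | ∃ j, key (track b j) ≤ a ∧ a < key (track b (j + 1))}.ncard := by
  refine Set.ncard_le_ncard_of_forall_subsingleton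
    (fun p b ↦ ∃ j, key (track b j) ≤ a ∧ a < key (track b (j + 1)) ∧
      p = s(track b j, track b (j + 1))) (Set.toFinite _) ?_ ?_
  · rintro p ⟨hp, u, v, rfl, hu, hv⟩
    obtain ⟨b, j, hbj⟩ := hcover _ hp
    have hcross : key (track b j) ≤ a ∧ a < key (track b (j + 1)) := by
      rcases Sym2.eq_iff.mp hbj with ⟨rfl, rfl⟩ | ⟨rfl, rfl⟩
      · exact ⟨hu, not_le.mp hv⟩
      · exact absurd ((hmono b j.le_succ).trans hu) hv
    exact ⟨b, ⟨j, hcross⟩, j, hcross.1, hcross.2, hbj⟩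
  · rintro b - p ⟨-, j, hj, hj', rfl⟩ q ⟨-, i, hi, hi', rfl⟩
    rw [(hmono b).eq_of_le_of_lt_succ hj hj' hi hi']

end SimpleGraph

open SimpleGraph

section Cutwidth

variable {W : Type*} [Finite W] (H : SimpleGraph W)

lemma cutwidth_eq_sInf_edgesLeaving : cutwidth H = sInf {w | ∃ f : W ≃ Fin (Nat.card W),
    ∀ i : ℕ, (H.edgesLeaving {u | (f u : ℕ) ≤ i}).ncard ≤ w} := by
  simp [cutwidth, edgesLeaving]

lemma cutwidth_le_of_equiv (f : W ≃ Fin (Nat.card W)) {c : ℕ}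
    (h : ∀ i : ℕ, (H.edgesLeaving {u | (f u : ℕ) ≤ i}).ncard ≤ c) : cutwidth H ≤ c :=
  cutwidth_eq_sInf_edgesLeaving H ▸ Nat.sInf_le ⟨f, h⟩

lemma exists_equiv_ncard_edgesLeaving_le_cutwidth :
    ∃ f : W ≃ Fin (Nat.card W), ∀ i : ℕ,
      (H.edgesLeaving {u | (f u : ℕ) ≤ i}).ncard ≤ cutwidth H := by
  rw [cutwidth_eq_sInf_edgesLeaving]
  exact Nat.sInf_mem (s := {w | ∃ f : W ≃ Fin (Nat.card W), ∀ i : ℕ,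
    (H.edgesLeaving {u | (f u : ℕ) ≤ i}).ncard ≤ w})
    ⟨_, Finite.equivFin W, fun _ ↦ Set.ncard_le_ncard fun _ he ↦ he.1⟩

lemma cutwidth_le_of_injective {α : Type*} [LinearOrder α] (key : W → α) (hkey : Injective key)
    {c : ℕ} (h : ∀ a : α, (H.edgesLeaving {u | key u ≤ a}).ncard ≤ c) : cutwidth H ≤ c := by
  let : LinearOrder W := LinearOrder.lift' key hkey
  let : Fintype W := Fintype.ofFinite W
  let φ : W ≃o Fin (Nat.card W) := (monoEquivOfFin W Nat.card_eq_fintype_card.symm).symm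
  refine cutwidth_le_of_equiv H φ.toEquiv fun i ↦ ?_
  by_cases hi : i < Nat.card W
  · convert h (key (φ.symm ⟨i, hi⟩)) using 4
    ext u
    exact (Fin.le_def (b := ⟨i, hi⟩)).symm.trans (φ.le_symm_apply).symm
  · have huniv : {u | (φ u : ℕ) ≤ i} = Set.univ :=
      Set.eq_univ_of_forall fun u ↦ (φ u).is_lt.le.trans (not_lt.mp hi)
    simp [huniv, edgesLeaving_univ]

end Cutwidth


section Stretch

variable {V : Type*} [LinearOrder V] {G : SimpleGraph V} {k : ℕ} {f : V → ℕ}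

/-- The subdivided edge `e` walked from its `f`-earlier endpoint; it stays at the other endpoint
for `j ≥ k`. -/
def stretchTrack (k : ℕ) (f : V → ℕ) (e : G.edgeSet) (j : ℕ) :
    V ⊕ (G.edgeSet × Fin (k - 1)) :=
  stretchNode G k e (if f (e : Sym2 V).inf ≤ f (e : Sym2 V).sup then j else k - j)

/-- Vertices of `G` keep their position `f v`; the inner vertices of an edge come right after its
`f`-earlier endpoint, numbered `1, …, k - 1` along the path from that endpoint. -/
def stretchKey (k : ℕ) (f : V → ℕ) : V ⊕ (G.edgeSet × Fin (k - 1)) → ℕ ×ₗ ℕ ×ₗ ℕ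
  | .inl v => toLex (f v, toLex (0, 0))
  | .inr (e, t) => toLex (((e : Sym2 V).map f).inf, toLex (((e : Sym2 V).map f).sup,
      if f (e : Sym2 V).inf ≤ f (e : Sym2 V).sup then t + 1 else k - 1 - t))

lemma stretchNode_zero (e : G.edgeSet) : stretchNode G k e 0 = .inl (e : Sym2 V).inf := rfl

lemma stretchNode_of_lt (e : G.edgeSet) {j : ℕ} (hj₀ : 0 < j) (hj : j < k) :
    stretchNode G k e j = .inr (e, ⟨j - 1, by omega⟩) := by
  simp [stretchNode, hj₀.ne', hj]

lemma stretchNode_of_le (e : G.edgeSet) {j : ℕ} (hj₀ : 0 < j) (hj : k ≤ j) :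
    stretchNode G k e j = .inl (e : Sym2 V).sup := by
  simp [stretchNode, hj₀.ne', hj]

lemma stretchKey_stretchTrack_zero (hk : 0 < k) (e : G.edgeSet) :
    stretchKey k f (stretchTrack k f e 0) = toLex (((e : Sym2 V).map f).inf, toLex (0, 0)) := by
  by_cases h : f (e : Sym2 V).inf ≤ f (e : Sym2 V).sup
  · simp [stretchTrack, h, stretchNode_zero, stretchKey, Sym2.inf_map]
  · simp [stretchTrack, h, stretchNode_of_le e hk le_rfl, stretchKey, Sym2.inf_map,
      (not_le.mp h).le]

lemma stretchKey_stretchTrack_of_lt (e : G.edgeSet) {j : ℕ} (hj₀ : 0 < j) (hj : j < k) :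
    stretchKey k f (stretchTrack k f e j) =
      toLex (((e : Sym2 V).map f).inf, toLex (((e : Sym2 V).map f).sup, j)) := by
  by_cases h : f (e : Sym2 V).inf ≤ f (e : Sym2 V).sup
  · simp [stretchTrack, h, stretchNode_of_lt e hj₀ hj, stretchKey, Nat.sub_add_cancel hj₀]
  · simp [stretchTrack, h, stretchNode_of_lt e (Nat.sub_pos_of_lt hj) (Nat.sub_lt (by omega) hj₀),
      stretchKey, show k - 1 - (k - j - 1) = j by omega]

lemma stretchKey_stretchTrack_of_le (e : G.edgeSet) {j : ℕ} (hj₀ : 0 < j) (hj : k ≤ j) :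
    stretchKey k f (stretchTrack k f e j) = toLex (((e : Sym2 V).map f).sup, toLex (0, 0)) := by
  by_cases h : f (e : Sym2 V).inf ≤ f (e : Sym2 V).sup
  · simp [stretchTrack, h, stretchNode_of_le e hj₀ hj, stretchKey, Sym2.sup_map]
  · simp [stretchTrack, h, Nat.sub_eq_zero_of_le hj, stretchNode_zero, stretchKey, Sym2.sup_map,
      (not_le.mp h).le]

lemma monotone_stretchKey_stretchTrack (hk : 0 < k) (hf : Injective f) (e : G.edgeSet) :
    Monotone (stretchKey k f ∘ stretchTrack k f e) := by
  have hlt : ((e : Sym2 V).map f).inf < ((e : Sym2 V).map f).sup :=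
    Sym2.inf_lt_sup ((Sym2.isDiag_map hf).not.mpr (G.not_isDiag_of_mem_edgeSet e.2))
  refine monotone_nat_of_le_succ fun j ↦ ?_
  simp only [Function.comp_apply]
  rcases Nat.eq_zero_or_pos j with rfl | hj₀
  · rw [stretchKey_stretchTrack_zero hk, zero_add]
    rcases lt_or_ge 1 k with h1 | h1
    · rw [stretchKey_stretchTrack_of_lt e one_pos h1]; simp [Prod.Lex.toLex_le_toLex']
    · rw [stretchKey_stretchTrack_of_le e one_pos h1]; simp [Prod.Lex.toLex_le_toLex, hlt]
  rcases lt_or_ge j k with hj | hj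
  · rw [stretchKey_stretchTrack_of_lt e hj₀ hj]
    rcases lt_or_ge (j + 1) k with h1 | h1
    · rw [stretchKey_stretchTrack_of_lt e j.succ_pos h1]; simp [Prod.Lex.toLex_le_toLex]
    · rw [stretchKey_stretchTrack_of_le e j.succ_pos h1]; simp [Prod.Lex.toLex_le_toLex, hlt]
  · rw [stretchKey_stretchTrack_of_le e hj₀ hj,
      stretchKey_stretchTrack_of_le e j.succ_pos (hj.trans j.le_succ)]

lemma stretchKey_injective (hf : Injective f) : Injective (stretchKey (G := G) k f) := by
  rintro (v | ⟨e, t⟩) (w | ⟨e', t'⟩) h <;> simp only [stretchKey, toLex_inj, Prod.mk.injEq] at h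
  · exact congrArg _ (hf h.1)
  -- inner vertices have a positive last coordinate
  · obtain ⟨-, -, h⟩ := h
    have := t'.isLt
    split_ifs at h
    omega
  · obtain ⟨-, -, h⟩ := h
    have := t.isLt
    split_ifs at h
    omega
  · obtain ⟨h1, h2, h3⟩ := h
    obtain rfl : e = e' :=
      Subtype.ext (Sym2.map.injective hf (Sym2.inf_eq_inf_and_sup_eq_sup.mp ⟨h1, h2⟩))
    have := t.isLt
    have := t'.isLt
    congr
    ext
    split_ifs at h3 <;> omega

lemma exists_eq_stretchTrack (f : V → ℕ) {p : Sym2 (V ⊕ (G.edgeSet × Fin (k - 1)))}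
    (hp : p ∈ (stretch G k).edgeSet) :
    ∃ e j, p = s(stretchTrack k f e j, stretchTrack k f e (j + 1)) := by
  simp only [stretch, SimpleGraph.edgeSet_fromEdgeSet] at hp
  obtain ⟨⟨e, j, hj, rfl⟩, -⟩ := hp
  by_cases h : f (e : Sym2 V).inf ≤ f (e : Sym2 V).sup
  · exact ⟨e, j, by simp [stretchTrack, h]⟩
  · refine ⟨e, k - 1 - j, ?_⟩
    simp only [stretchTrack, h, if_false]
    rw [show k - (k - 1 - j) = j + 1 by omega, show k - (k - 1 - j + 1) = j by omega, Sym2.eq_swap]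

lemma mem_edgesLeaving_of_stretchKey_le_of_lt (hk : 0 < k) (hf : Injective f) (e : G.edgeSet)
    {a : ℕ ×ₗ ℕ ×ₗ ℕ} {j : ℕ} (hj : stretchKey k f (stretchTrack k f e j) ≤ a)
    (hj' : a < stretchKey k f (stretchTrack k f e (j + 1))) :
    (e : Sym2 V) ∈ G.edgesLeaving {v | f v ≤ (ofLex a).1} := by
  have hmono := monotone_stretchKey_stretchTrack hk hf e
  have h₀ : stretchKey k f (stretchTrack k f e 0) ≤ a := (hmono j.zero_le).trans hj
  have hₖ : a < stretchKey k f (stretchTrack k f e (j + 1 + k)) :=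
    hj'.trans_le (hmono (Nat.le_add_right _ _))
  rw [stretchKey_stretchTrack_zero hk] at h₀
  rw [stretchKey_stretchTrack_of_le e (by omega) (by omega)] at hₖ
  refine G.mem_edgesLeaving_of_inf_map_le_of_lt_sup_map e.2 (Prod.Lex.monotone_fst_ofLex h₀) ?_
  rcases Prod.Lex.lt_iff.mp hₖ with h | ⟨-, h⟩
  · exact h
  · exact absurd h (by rw [Prod.Lex.lt_iff]; simp)

end Stretch

/-- For every finite simple graph `G` and integer `k ≥ 1`, the cutwidth of the
`k`-stretch satisfies `ctw(ᵏG) ≤ ctw(G)`. -/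
theorem cutwidth_stretch_le {V : Type*} [Finite V] [LinearOrder V]
    (G : SimpleGraph V) (k : ℕ) (hk : 1 ≤ k) :
    cutwidth (stretch G k) ≤ cutwidth G := by
  obtain ⟨f, hf⟩ := exists_equiv_ncard_edgesLeaving_le_cutwidth G
  let g : V → ℕ := fun v ↦ f v
  have hg : Injective g := Fin.val_injective.comp f.injective
  refine cutwidth_le_of_injective _ _ (stretchKey_injective hg) fun a ↦ ?_
  calc _ ≤ {e : G.edgeSet | ∃ j, stretchKey k g (stretchTrack k g e j) ≤ a ∧
          a < stretchKey k g (stretchTrack k g e (j + 1))}.ncard :=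
        ncard_edgesLeaving_le_of_monotone_tracks _ _
          (monotone_stretchKey_stretchTrack hk hg) (fun _ ↦ exists_eq_stretchTrack g) a
    _ ≤ (G.edgesLeaving {v | g v ≤ (ofLex a).1}).ncard :=
        Set.ncard_le_ncard_of_injOn Subtype.val
          (fun e ⟨_, hj, hj'⟩ ↦ mem_edgesLeaving_of_stretchKey_le_of_lt hk hg e hj hj')
          Subtype.val_injective.injOn
    _ ≤ cutwidth G := hf _
end
end

section
/- For every finite simple graph G and every integer k ≥ 1, the pathwidth of the k-stretch satisfies pw(^kG) ≤ pw(G) + 2. -/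
noncomputable section

/-- `B : Fin m → Set V` is a path decomposition of `G`: every vertex is in some
bag, both endpoints of every edge are together in some bag, and for every
vertex the set of bags containing it is an interval of consecutive indices. -/
def IsPathDecomp {V : Type*} (G : SimpleGraph V) (m : ℕ) (B : Fin m → Set V) : Prop :=
  (∀ v, ∃ i, v ∈ B i) ∧
  (∀ u v, G.Adj u v → ∃ i, u ∈ B i ∧ v ∈ B i) ∧
  (∀ (v) (i j k : Fin m), i ≤ j → j ≤ k → v ∈ B i → v ∈ B k → v ∈ B j)

/-- The pathwidth of a finite simple graph: the minimum width `max_i |B_i| − 1`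
over all path decompositions. -/
def pathwidth {V : Type*} [Finite V] (G : SimpleGraph V) : ℕ :=
  sInf {w | ∃ (m : ℕ) (B : Fin m → Set V),
    IsPathDecomp G m B ∧ ∀ i, (B i).ncard ≤ w + 1}

/-! ### auxiliary lemmas -/

lemma pathwidth_le_of_decomp {V : Type*} [Finite V] (G : SimpleGraph V)
    {ι : Type*} [LinearOrder ι] [Finite ι] (B : ι → Set V) (w : ℕ)
    (h1 : ∀ v, ∃ i, v ∈ B i)
    (h2 : ∀ u v, G.Adj u v → ∃ i, u ∈ B i ∧ v ∈ B i)
    (h3 : ∀ (v : V) (i j l : ι), i ≤ j → j ≤ l → v ∈ B i → v ∈ B l → v ∈ B j)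
    (h4 : ∀ i, (B i).ncard ≤ w + 1) :
    pathwidth G ≤ w := by
  have : Fintype ι := Fintype.ofFinite ι
  let φ : Fin (Fintype.card ι) ≃o ι := Fintype.orderIsoFinOfCardEq ι rfl
  apply Nat.sInf_le
  refine ⟨Fintype.card ι, fun i => B (φ i), ⟨?_, ?_, ?_⟩, fun i => h4 _⟩
  · intro v
    obtain ⟨i, hi⟩ := h1 v
    exact ⟨φ.symm i, by simpa using hi⟩
  · intro u v huv
    obtain ⟨i, hi, hi'⟩ := h2 u v huv
    exact ⟨φ.symm i, by simpa using hi, by simpa using hi'⟩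
  · intro v i j l hij hjl hi hl
    exact h3 v (φ i) (φ j) (φ l) (φ.monotone hij) (φ.monotone hjl) hi hl

lemma stretchNode_inr' {V : Type*} [LinearOrder V] {G : SimpleGraph V} {k : ℕ}
    {e e' : G.edgeSet} {j : ℕ} {t : Fin (k - 1)}
    (h : stretchNode G k e j = Sum.inr (e', t)) :
    e' = e ∧ (t : ℕ) + 1 = j := by
  rcases Nat.eq_zero_or_pos j with rfl | hj0
  · simp [stretchNode] at h
  by_cases hlt : j < k
  · rw [stretchNode, dif_neg (by omega), dif_pos hlt] at h
    have h' := Sum.inr.inj h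
    have he : e = e' := congrArg Prod.fst h'
    have ht : j - 1 = (t : ℕ) := congrArg (fun x => ((x.2 : Fin (k - 1)) : ℕ)) h'
    exact ⟨he.symm, by omega⟩
  · rw [stretchNode, dif_neg (by omega), dif_neg hlt] at h
    simp at h

lemma stretchNode_inl' {V : Type*} [LinearOrder V] {G : SimpleGraph V} {k : ℕ}
    {e : G.edgeSet} {j : ℕ} {v : V}
    (h : stretchNode G k e j = Sum.inl v) :
    v = (e : Sym2 V).inf ∨ v = (e : Sym2 V).sup := by
  rcases Nat.eq_zero_or_pos j with rfl | hj0
  · rw [stretchNode, dif_pos rfl] at h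
    exact Or.inl (Sum.inl.inj h).symm
  by_cases hlt : j < k
  · rw [stretchNode, dif_neg (by omega), dif_pos hlt] at h
    simp at h
  · rw [stretchNode, dif_neg (by omega), dif_neg hlt] at h
    exact Or.inr (Sum.inl.inj h).symm

lemma stretchNode_succ_coe {V : Type*} [LinearOrder V] (G : SimpleGraph V) {k : ℕ}
    (e : G.edgeSet) (t : Fin (k - 1)) :
    stretchNode G k e ((t : ℕ) + 1) = Sum.inr (e, t) := by
  have ht := t.isLt
  rw [stretchNode, dif_neg (by omega), dif_pos (by omega)]
  exact congrArg Sum.inr (Prod.ext rfl (Fin.ext (by simp)))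

lemma adj_inf_sup {V : Type*} [LinearOrder V] {G : SimpleGraph V} (e : G.edgeSet) :
    G.Adj (e : Sym2 V).inf (e : Sym2 V).sup := by
  obtain ⟨e, he⟩ := e
  induction e using Sym2.ind with
  | _ a b =>
    rw [SimpleGraph.mem_edgeSet] at he
    simp only [Sym2.inf_mk, Sym2.sup_mk]
    rcases le_total a b with hab | hab
    · rwa [inf_eq_left.mpr hab, sup_eq_right.mpr hab]
    · rw [inf_eq_right.mpr hab, sup_eq_left.mpr hab]
      exact he.symm

/-- The bags for the `k`-stretch. -/
def sBag {V : Type*} [LinearOrder V] (G : SimpleGraph V) (k m E : ℕ)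
    (B : Fin m → Set V) (f : G.edgeSet → Fin m) (ε : G.edgeSet ≃ Fin E)
    (p : Fin m ×ₗ WithBot (Fin E ×ₗ Fin k)) : Set (V ⊕ (G.edgeSet × Fin (k - 1))) :=
  Sum.inl '' B (ofLex p).1 ∪
    WithBot.recBotCoe ∅
      (fun q => if f (ε.symm (ofLex q).1) = (ofLex p).1 then
        {stretchNode G k (ε.symm (ofLex q).1) ((ofLex q).2 : ℕ),
         stretchNode G k (ε.symm (ofLex q).1) (((ofLex q).2 : ℕ) + 1)} else ∅)
      (ofLex p).2

/-- For every finite simple graph `G` and integer `k ≥ 1`, the pathwidth of the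
`k`-stretch satisfies `pw(ᵏG) ≤ pw(G) + 2`. -/
theorem pathwidth_stretch_le {V : Type*} [Finite V] [LinearOrder V]
    (G : SimpleGraph V) (k : ℕ) (hk : 1 ≤ k) :
    pathwidth (stretch G k) ≤ pathwidth G + 2 := by
  classical
  have hne : {w | ∃ (m : ℕ) (B : Fin m → Set V),
      IsPathDecomp G m B ∧ ∀ i, (B i).ncard ≤ w + 1}.Nonempty := by
    refine ⟨(Set.univ : Set V).ncard, 1, fun _ => Set.univ,
      ⟨fun v => ⟨0, trivial⟩, fun u v _ => ⟨0, trivial, trivial⟩,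
        fun _ _ _ _ _ _ _ _ => trivial⟩, fun i => Nat.le_succ _⟩
  obtain ⟨m, B, ⟨hB1, hB2, hB3⟩, hB4⟩ := Nat.sInf_mem hne
  have hB4' : ∀ i, (B i).ncard ≤ pathwidth G + 1 := hB4
  have : Fintype G.edgeSet := Fintype.ofFinite _
  set E := Fintype.card G.edgeSet with hE
  let ε : G.edgeSet ≃ Fin E := Fintype.equivFin _
  let f : G.edgeSet → Fin m := fun e => (hB2 _ _ (adj_inf_sup e)).choose
  have hf : ∀ e : G.edgeSet, (e : Sym2 V).inf ∈ B (f e) ∧ (e : Sym2 V).sup ∈ B (f e) :=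
    fun e => (hB2 _ _ (adj_inf_sup e)).choose_spec
  haveI : Finite (Fin E ×ₗ Fin k) := inferInstanceAs (Finite (Fin E × Fin k))
  haveI : Finite (WithBot (Fin E ×ₗ Fin k)) := inferInstanceAs (Finite (Option (Fin E ×ₗ Fin k)))
  haveI : Finite (Fin m ×ₗ WithBot (Fin E ×ₗ Fin k)) :=
    inferInstanceAs (Finite (Fin m × WithBot (Fin E ×ₗ Fin k)))
  -- membership characterizations
  have memInl : ∀ (v : V) (i : Fin m) (s : WithBot (Fin E ×ₗ Fin k)),
      Sum.inl v ∈ sBag G k m E B f ε (toLex (i, s)) ↔ v ∈ B i := by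
    intro v i s
    constructor
    · rintro (⟨v', hv', hvv⟩ | h)
      · rwa [← Sum.inl.inj hvv]
      · cases s with
        | bot => exact absurd h (Set.notMem_empty _)
        | coe q =>
          change Sum.inl v ∈ (if f (ε.symm (ofLex q).1) = i then ({stretchNode G k (ε.symm (ofLex q).1) ((ofLex q).2 : ℕ), stretchNode G k (ε.symm (ofLex q).1) (((ofLex q).2 : ℕ) + 1)} : Set (V ⊕ (G.edgeSet × Fin (k - 1)))) else ∅) at h
          split_ifs at h with hfi
          · rw [Set.mem_insert_iff, Set.mem_singleton_iff] at h
            rcases h with h | h <;>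
            · rcases stretchNode_inl' h.symm with hv | hv
              · rw [hv, ← hfi]; exact (hf _).1
              · rw [hv, ← hfi]; exact (hf _).2
          · exact absurd h (Set.notMem_empty _)
    · intro hv
      exact Or.inl ⟨v, hv, rfl⟩
  have memInr : ∀ (e : G.edgeSet) (t : Fin (k - 1)) (i : Fin m)
      (s : WithBot (Fin E ×ₗ Fin k)),
      Sum.inr (e, t) ∈ sBag G k m E B f ε (toLex (i, s)) ↔
        i = f e ∧ ∃ j : Fin k, s = (toLex (ε e, j) : Fin E ×ₗ Fin k) ∧
          ((j : ℕ) = (t : ℕ) + 1 ∨ (j : ℕ) = (t : ℕ)) := by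
    intro e t i s
    constructor
    · rintro (⟨v', hv', hvv⟩ | h)
      · exact absurd hvv (by simp)
      · cases s with
        | bot => exact absurd h (Set.notMem_empty _)
        | coe q =>
          change Sum.inr (e, t) ∈ (if f (ε.symm (ofLex q).1) = i then ({stretchNode G k (ε.symm (ofLex q).1) ((ofLex q).2 : ℕ), stretchNode G k (ε.symm (ofLex q).1) (((ofLex q).2 : ℕ) + 1)} : Set (V ⊕ (G.edgeSet × Fin (k - 1)))) else ∅) at h
          split_ifs at h with hfi
          · rw [Set.mem_insert_iff, Set.mem_singleton_iff] at h
            rcases h with h | h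
            · obtain ⟨he, ht⟩ := stretchNode_inr' h.symm
              refine ⟨by rw [← hfi, he], (ofLex q).2, ?_, Or.inl ht.symm⟩
              rw [show (ε e : Fin E) = (ofLex q).1 by rw [he]; simp]
              rfl
            · obtain ⟨he, ht⟩ := stretchNode_inr' h.symm
              refine ⟨by rw [← hfi, he], (ofLex q).2, ?_, Or.inr (by omega)⟩
              rw [show (ε e : Fin E) = (ofLex q).1 by rw [he]; simp]
              rfl
          · exact absurd h (Set.notMem_empty _)
    · rintro ⟨rfl, j, rfl, hj⟩
      right
      have hsimp : ε.symm (ε e) = e := ε.symm_apply_apply e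
      simp only [ofLex_toLex, WithBot.recBotCoe_coe, hsimp, if_pos rfl]
      rcases hj with hj | hj
      · exact Set.mem_insert_iff.mpr (Or.inl (by rw [hj]; exact (stretchNode_succ_coe G e t).symm))
      · refine Set.mem_insert_iff.mpr (Or.inr ?_)
        rw [Set.mem_singleton_iff, hj]
        exact (stretchNode_succ_coe G e t).symm
  -- apply the transfer lemma
  apply pathwidth_le_of_decomp (stretch G k) (sBag G k m E B f ε) (pathwidth G + 2)
  · rintro (v | ⟨e, t⟩)
    · obtain ⟨i, hi⟩ := hB1 v
      exact ⟨toLex (i, ⊥), (memInl v i ⊥).mpr hi⟩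
    · have ht := t.isLt
      refine ⟨toLex (f e, ((toLex (ε e, ⟨(t : ℕ) + 1, by omega⟩) : Fin E ×ₗ Fin k) :
        WithBot (Fin E ×ₗ Fin k))),
        (memInr e t _ _).mpr ⟨rfl, ⟨(t : ℕ) + 1, by omega⟩, rfl, Or.inl rfl⟩⟩
  · intro u v huv
    rw [stretch, SimpleGraph.fromEdgeSet_adj] at huv
    obtain ⟨⟨e, j, hj, hp⟩, hne'⟩ := huv
    have hpair : {stretchNode G k e j, stretchNode G k e (j + 1)} ⊆
        sBag G k m E B f ε (toLex (f e,
          ((toLex (ε e, (⟨j, hj⟩ : Fin k)) : Fin E ×ₗ Fin k) : WithBot (Fin E ×ₗ Fin k)))) := by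
      intro x hx
      right
      have hsimp : ε.symm (ε e) = e := ε.symm_apply_apply e
      simpa only [ofLex_toLex, WithBot.recBotCoe_coe, hsimp, if_pos rfl, if_pos trivial] using hx
    rw [Sym2.eq_iff] at hp
    refine ⟨toLex (f e, ((toLex (ε e, (⟨j, hj⟩ : Fin k)) : Fin E ×ₗ Fin k) :
      WithBot (Fin E ×ₗ Fin k))), ?_, ?_⟩
    · rcases hp with ⟨rfl, _⟩ | ⟨rfl, _⟩
      · exact hpair (Set.mem_insert _ _)
      · exact hpair (Set.mem_insert_iff.mpr (Or.inr rfl))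
    · rcases hp with ⟨_, rfl⟩ | ⟨_, rfl⟩
      · exact hpair (Set.mem_insert_iff.mpr (Or.inr rfl))
      · exact hpair (Set.mem_insert _ _)
  · rintro (v | ⟨e, t⟩) p q r hpq hqr hp hr
    · have h1 := Prod.Lex.monotone_fst p q hpq
      have h2 := Prod.Lex.monotone_fst q r hqr
      have hp' := (memInl v (ofLex p).1 (ofLex p).2).mp hp
      have hr' := (memInl v (ofLex r).1 (ofLex r).2).mp hr
      exact (memInl v (ofLex q).1 (ofLex q).2).mpr (hB3 v _ _ _ h1 h2 hp' hr')
    · obtain ⟨hip, j1, hsp, hj1⟩ := (memInr e t (ofLex p).1 (ofLex p).2).mp hp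
      obtain ⟨hir, j2, hsr, hj2⟩ := (memInr e t (ofLex r).1 (ofLex r).2).mp hr
      have h1 := Prod.Lex.monotone_fst p q hpq
      have h2 := Prod.Lex.monotone_fst q r hqr
      have hiq : (ofLex q).1 = f e :=
        le_antisymm (by rw [← hir]; exact h2) (by rw [← hip]; exact h1)
      have hpq' : (ofLex p).2 ≤ (ofLex q).2 := by
        rcases Prod.Lex.le_iff.mp hpq with h | ⟨_, h⟩
        · exact absurd h (by rw [hip, hiq]; exact lt_irrefl _)
        · exact h
      have hqr' : (ofLex q).2 ≤ (ofLex r).2 := by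
        rcases Prod.Lex.le_iff.mp hqr with h | ⟨_, h⟩
        · exact absurd h (by rw [hir, hiq]; exact lt_irrefl _)
        · exact h
      rw [hsp] at hpq'
      rw [hsr] at hqr'
      cases hq : (ofLex q).2 with
      | bot => rw [hq] at hpq'; exact absurd hpq' (WithBot.not_coe_le_bot _)
      | coe c =>
        rw [hq, WithBot.coe_le_coe] at hpq' hqr'
        have hc1 : (ofLex c).1 = ε e := by
          rcases Prod.Lex.le_iff.mp hpq' with h | ⟨h, _⟩
          · rcases Prod.Lex.le_iff.mp hqr' with h' | ⟨h', _⟩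
            · exact absurd (h.trans h') (lt_irrefl _)
            · exact h'
          · exact h.symm
        have hc2p : j1 ≤ (ofLex c).2 := by
          rcases Prod.Lex.le_iff.mp hpq' with h | ⟨_, h⟩
          · exact absurd (hc1 ▸ h) (lt_irrefl _)
          · exact h
        have hc2r : (ofLex c).2 ≤ j2 := by
          rcases Prod.Lex.le_iff.mp hqr' with h | ⟨_, h⟩
          · exact absurd (hc1 ▸ h) (lt_irrefl _)
          · exact h
        apply (memInr e t (ofLex q).1 (ofLex q).2).mpr
        refine ⟨hiq, (ofLex c).2, ?_, ?_⟩
        · rw [hq]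
          have hce : (ε e, (ofLex c).2) = ofLex c := Prod.ext hc1.symm rfl
          rw [hce]
          rfl
        · have hj1' : (j1 : ℕ) ≤ ((ofLex c).2 : ℕ) := hc2p
          have hj2' : ((ofLex c).2 : ℕ) ≤ (j2 : ℕ) := hc2r
          rcases hj1 with h1' | h1' <;> rcases hj2 with h2' | h2' <;> omega
  · intro p
    have hle : (sBag G k m E B f ε p).ncard ≤
        (Sum.inl '' B (ofLex p).1 : Set (V ⊕ (G.edgeSet × Fin (k - 1)))).ncard + 2 := by
      simp only [sBag]
      refine le_trans (Set.ncard_union_le _ _) ?_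
      gcongr
      cases hs : (ofLex p).2 with
      | bot => simp
      | coe q =>
        simp only [WithBot.recBotCoe_coe]
        split_ifs
        · exact le_trans (Set.ncard_insert_le _ _) (by simp)
        · simp
    calc (sBag G k m E B f ε p).ncard
        ≤ (Sum.inl '' B (ofLex p).1 : Set (V ⊕ (G.edgeSet × Fin (k - 1)))).ncard + 2 := hle
      _ = (B (ofLex p).1).ncard + 2 := by rw [Set.ncard_image_of_injective _ Sum.inl_injective]
      _ ≤ (pathwidth G + 1) + 2 := by have := hB4' (ofLex p).1; omega
      _ = (pathwidth G + 2) + 1 := by ring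
end
end

section
/- Let G = (V,E) be a finite simple graph, let k ≥ 1 be an integer, and let a, b be elements of a field K such that s := 1 + a + a² + ⋯ + a^{k−1} ≠ 0. Then T(^kG; a, b) = s^{|E| − |V| + c(G)} · T(G; a^k, (b + a + a² + ⋯ + a^{k−1})/s), where c(G) is the number of connected components of G and the exponent |E| − |V| + c(G) is a nonnegative integer. (This is the k-stretch instance of Brylawski's tensor product formula; note that the new evaluation point lies on the same hyperbola, since (a^k − 1)·((b + a + ⋯ + a^{k−1})/s − 1) = (a−1)(b−1).) -/
noncomputable section

/-- The number of connected components of the spanning subgraph of a finite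
vertex set with edge set `A`. -/
def nComp {V : Type*} [Finite V] (A : Set (Sym2 V)) : ℕ :=
  Nat.card (SimpleGraph.fromEdgeSet A).ConnectedComponent

/-- The Tutte polynomial
`T(G; x, y) = Σ_{A ⊆ E} (x−1)^(c(A)−c(E)) (y−1)^(c(A)+|A|−|V|)` of a finite
simple graph, evaluated at a point `(x, y)` of a commutative ring (both
exponents are nonnegative integers). -/
def tutte {V : Type*} [Finite V] (G : SimpleGraph V) {K : Type*} [CommRing K]
    (x y : K) : K := by
  classical
  letI : Fintype V := Fintype.ofFinite V
  letI : Fintype G.edgeSet := Fintype.ofFinite _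
  exact ∑ A ∈ G.edgeFinset.powerset,
    (x - 1) ^ (nComp (A : Set (Sym2 V)) - nComp G.edgeSet) *
      (y - 1) ^ (nComp (A : Set (Sym2 V)) + A.card - Nat.card V)

open SimpleGraph Function

section CCLemmas

variable {Vt : Type*}

lemma card_cc_eq {C : Type*} (G' : SimpleGraph Vt) (φ : Vt → C)
    (h1 : ∀ x y, G'.Adj x y → φ x = φ y)
    (h2 : Function.Surjective φ)
    (h3 : ∀ x y, φ x = φ y → G'.Reachable x y) :
    Nat.card G'.ConnectedComponent = Nat.card C := by
  have hwalk : ∀ (v w : Vt) (p : G'.Walk v w), φ v = φ w := by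
    intro v w p
    induction p with
    | nil => rfl
    | cons h q ih => exact (h1 _ _ h).trans ih
  refine Nat.card_eq_of_bijective
    (SimpleGraph.ConnectedComponent.lift φ (fun v w p _ => hwalk v w p)) ⟨?_, ?_⟩
  · intro c c' hcc
    obtain ⟨x, rfl⟩ := c.exists_rep
    obtain ⟨y, rfl⟩ := c'.exists_rep
    exact SimpleGraph.ConnectedComponent.sound (h3 _ _ hcc)
  · intro c
    obtain ⟨x, rfl⟩ := h2 c
    exact ⟨G'.connectedComponentMk x, rfl⟩

/-- The canonical map between component types of nested graphs. -/
def ccMap {G G' : SimpleGraph Vt} (h : G ≤ G') :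
    G.ConnectedComponent → G'.ConnectedComponent :=
  SimpleGraph.ConnectedComponent.lift (fun v => G'.connectedComponentMk v)
    (fun _ _ p _ => SimpleGraph.ConnectedComponent.sound (p.reachable.mono h))

lemma ccMap_surjective {G G' : SimpleGraph Vt} (h : G ≤ G') :
    Function.Surjective (ccMap h) := by
  intro c
  obtain ⟨x, rfl⟩ := c.exists_rep
  exact ⟨G.connectedComponentMk x, rfl⟩

lemma card_cc_mono [Finite Vt] {G G' : SimpleGraph Vt} (h : G ≤ G') :
    Nat.card G'.ConnectedComponent ≤ Nat.card G.ConnectedComponent :=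
  Nat.card_le_card_of_surjective _ (ccMap_surjective h)

lemma reachable_sup_edge {G : SimpleGraph Vt} {x y u v : Vt}
    (h : (G ⊔ SimpleGraph.fromEdgeSet {s(x, y)}).Reachable u v) :
    G.Reachable u v ∨ (G.Reachable u x ∧ G.Reachable y v) ∨
      (G.Reachable u y ∧ G.Reachable x v) := by
  obtain ⟨p⟩ := h
  induction p with
  | nil => exact Or.inl (Reachable.refl _)
  | @cons u w v h q ih =>
    rcases (by simpa using h :
        G.Adj u w ∨ (SimpleGraph.fromEdgeSet {s(x, y)}).Adj u w) with h | h
    · rcases ih with h' | ⟨h1, h2⟩ | ⟨h1, h2⟩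
      · exact Or.inl (h.reachable.trans h')
      · exact Or.inr (Or.inl ⟨h.reachable.trans h1, h2⟩)
      · exact Or.inr (Or.inr ⟨h.reachable.trans h1, h2⟩)
    · rw [SimpleGraph.fromEdgeSet_adj] at h
      obtain ⟨hm, hne⟩ := h
      simp only [Set.mem_singleton_iff] at hm
      rcases Sym2.eq_iff.mp hm with ⟨hux, hwy⟩ | ⟨huy, hwx⟩
      · subst hux; subst hwy
        rcases ih with h' | ⟨h1, h2⟩ | ⟨h1, h2⟩
        · exact Or.inr (Or.inl ⟨Reachable.refl _, h'⟩)
        · exact Or.inr (Or.inl ⟨Reachable.refl _, h2⟩)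
        · exact Or.inl h2
      · subst huy; subst hwx
        rcases ih with h' | ⟨h1, h2⟩ | ⟨h1, h2⟩
        · exact Or.inr (Or.inr ⟨Reachable.refl _, h'⟩)
        · exact Or.inl h2
        · exact Or.inr (Or.inr ⟨Reachable.refl _, h2⟩)

lemma card_cc_le_add_edge [Finite Vt] (G : SimpleGraph Vt) (x y : Vt) :
    Nat.card G.ConnectedComponent ≤
      Nat.card (G ⊔ SimpleGraph.fromEdgeSet {s(x, y)}).ConnectedComponent + 1 := by
  classical
  have hle : G ≤ G ⊔ SimpleGraph.fromEdgeSet {s(x, y)} := le_sup_left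
  set m := ccMap hle with hm
  have key : ∀ c c' : G.ConnectedComponent, m c = m c' → c ≠ c' →
      (c = G.connectedComponentMk x ∧ c' = G.connectedComponentMk y) ∨
      (c = G.connectedComponentMk y ∧ c' = G.connectedComponentMk x) := by
    intro c c' hmc hne
    obtain ⟨u, rfl⟩ := c.exists_rep
    obtain ⟨v, rfl⟩ := c'.exists_rep
    have : (G ⊔ SimpleGraph.fromEdgeSet {s(x, y)}).Reachable u v :=
      SimpleGraph.ConnectedComponent.exact hmc
    rcases reachable_sup_edge this with h' | ⟨h1, h2⟩ | ⟨h1, h2⟩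
    · exact absurd (SimpleGraph.ConnectedComponent.sound h') hne
    · exact Or.inl ⟨SimpleGraph.ConnectedComponent.sound h1,
        (SimpleGraph.ConnectedComponent.sound h2).symm⟩
    · exact Or.inr ⟨SimpleGraph.ConnectedComponent.sound h1,
        (SimpleGraph.ConnectedComponent.sound h2).symm⟩
  set ι : G.ConnectedComponent →
      (G ⊔ SimpleGraph.fromEdgeSet {s(x, y)}).ConnectedComponent ⊕ Unit := fun c =>
    if c = G.connectedComponentMk y ∧ G.connectedComponentMk x ≠ G.connectedComponentMk y
    then Sum.inr () else Sum.inl (m c) with hι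
  have hinj : Function.Injective ι := by
    intro c c' h
    by_contra hne
    simp only [hι] at h
    by_cases hc : c = G.connectedComponentMk y ∧
        G.connectedComponentMk x ≠ G.connectedComponentMk y
    · by_cases hc' : c' = G.connectedComponentMk y ∧
          G.connectedComponentMk x ≠ G.connectedComponentMk y
      · exact hne (hc.1.trans hc'.1.symm)
      · rw [if_pos hc, if_neg hc'] at h
        exact (by simpa using h)
    · by_cases hc' : c' = G.connectedComponentMk y ∧
          G.connectedComponentMk x ≠ G.connectedComponentMk y
      · rw [if_neg hc, if_pos hc'] at h
        exact (by simpa using h)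
      · rw [if_neg hc, if_neg hc'] at h
        simp only [Sum.inl.injEq] at h
        rcases key c c' h hne with ⟨h1, h2⟩ | ⟨h1, h2⟩
        · rcases eq_or_ne (G.connectedComponentMk x) (G.connectedComponentMk y) with he | he
          · exact hne (by rw [h1, h2, he])
          · exact hc' ⟨h2, he⟩
        · rcases eq_or_ne (G.connectedComponentMk x) (G.connectedComponentMk y) with he | he
          · exact hne (by rw [h1, h2, ← he])
          · exact hc ⟨h1, he⟩
  calc Nat.card G.ConnectedComponent
      ≤ Nat.card ((G ⊔ SimpleGraph.fromEdgeSet {s(x, y)}).ConnectedComponent ⊕ Unit) :=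
        Nat.card_le_card_of_injective ι hinj
    _ = _ := by simp [Nat.card_sum]

end CCLemmas

section Part2
variable {Vt : Type*}

lemma card_cc_bot [Finite Vt] : Nat.card (⊥ : SimpleGraph Vt).ConnectedComponent = Nat.card Vt :=
  card_cc_eq _ id (fun x y h => absurd h (by simp)) surjective_id
    (fun x y h => (show x = y from h) ▸ SimpleGraph.Reachable.refl _)

lemma card_le_nComp_add_card [Finite Vt] (A : Finset (Sym2 Vt)) :
    Nat.card Vt ≤ Nat.card (SimpleGraph.fromEdgeSet (A : Set (Sym2 Vt))).ConnectedComponent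
      + A.card := by
  classical
  induction A using Finset.induction_on with
  | empty => simp [card_cc_bot]
  | @insert q A hq ih =>
    rw [Finset.card_insert_of_notMem hq]
    refine le_trans ih ?_
    have hun : (↑(insert q A) : Set (Sym2 Vt)) = ↑A ∪ {q} := by
      rw [Finset.coe_insert, Set.insert_eq, Set.union_comm]
    induction q with
    | h x y =>
      have := card_cc_le_add_edge (SimpleGraph.fromEdgeSet (A : Set (Sym2 Vt))) x y
      rw [← SimpleGraph.fromEdgeSet_union, ← hun] at this
      omega

lemma Sym2.inf_ne_sup_of_not_isDiag {α : Type*} [LinearOrder α] {p : Sym2 α}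
    (h : ¬ p.IsDiag) : p.inf ≠ p.sup := by
  induction p with
  | h x y =>
    rw [Sym2.mk_isDiag_iff] at h
    simpa [inf_eq_sup] using h

lemma Sym2.mk_inf_sup {α : Type*} [LinearOrder α] (p : Sym2 α) :
    s(p.inf, p.sup) = p := by
  induction p with
  | h x y =>
    rcases le_total x y with h | h
    · simp [Sym2.inf_mk, Sym2.sup_mk, inf_eq_left.mpr h, sup_eq_right.mpr h]
    · rw [Sym2.inf_mk, Sym2.sup_mk, inf_eq_right.mpr h, sup_eq_left.mpr h, Sym2.eq_swap]

end Part2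

section Part3
open SimpleGraph

variable {V : Type*} [LinearOrder V] (G : SimpleGraph V) (k : ℕ)

lemma node_zero (e : G.edgeSet) : stretchNode G k e 0 = Sum.inl (e : Sym2 V).inf := by
  simp [stretchNode]

lemma node_top (e : G.edgeSet) {j : ℕ} (hk : 1 ≤ k) (h : k ≤ j) :
    stretchNode G k e j = Sum.inl (e : Sym2 V).sup := by
  rw [stretchNode, dif_neg (by omega : ¬ j = 0), dif_neg (by omega : ¬ j < k)]

lemma node_mid (e : G.edgeSet) {j : ℕ} (h0 : 0 < j) (h : j < k) :
    stretchNode G k e j = Sum.inr (e, ⟨j - 1, by omega⟩) := by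
  rw [stretchNode, dif_neg (by omega : ¬ j = 0), dif_pos h]

lemma node_inj (e : G.edgeSet) {j j' : ℕ} (hj : j ≤ k) (hj' : j' ≤ k)
    (h : stretchNode G k e j = stretchNode G k e j') : j = j' := by
  classical
  have hd : ¬ (e : Sym2 V).IsDiag := G.not_isDiag_of_mem_edgeSet e.2
  have hne : (e : Sym2 V).inf ≠ (e : Sym2 V).sup := Sym2.inf_ne_sup_of_not_isDiag hd
  set cn : (V ⊕ (G.edgeSet × Fin (k - 1))) → ℕ := fun w =>
    match w with
    | Sum.inl v => if v = (e : Sym2 V).inf then 0 else k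
    | Sum.inr (_, i) => (i : ℕ) + 1 with hcn
  have key : ∀ i, i ≤ k → cn (stretchNode G k e i) = i := by
    intro i hik
    rcases Nat.eq_zero_or_pos i with rfl | h0
    · rw [node_zero]; simp [hcn]
    · rcases lt_or_ge i k with hlt | hge
      · rw [node_mid G k e h0 hlt]; simp [hcn]; omega
      · have hik2 : i = k := le_antisymm hik hge
        rw [hik2, node_top G k e (by omega) le_rfl]
        simp [hcn, hne.symm]
  rw [← key j hj, ← key j' hj', h]

lemma node_inr_eq {e e' : G.edgeSet} {i : Fin (k - 1)} {j : ℕ}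
    (h : stretchNode G k e j = Sum.inr (e', i)) : e = e' := by
  rw [stretchNode] at h
  split_ifs at h <;> simp_all

/-- The stretch edge with label `(e, j)`. -/
def edgeOf (p : G.edgeSet × ℕ) : Sym2 (V ⊕ (G.edgeSet × Fin (k - 1))) :=
  s(stretchNode G k p.1 p.2, stretchNode G k p.1 (p.2 + 1))

lemma node_ne_next (e : G.edgeSet) {j : ℕ} (hj : j < k) :
    stretchNode G k e j ≠ stretchNode G k e (j + 1) := fun h => by
  have := node_inj G k e (by omega) (by omega) h; omega

lemma edgeOf_not_isDiag {e : G.edgeSet} {j : ℕ} (hj : j < k) :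
    ¬ (edgeOf G k (e, j)).IsDiag := by
  rw [edgeOf, Sym2.mk_isDiag_iff]
  exact node_ne_next G k e hj

lemma exists_inr_mem (hk2 : 2 ≤ k) (e : G.edgeSet) {j : ℕ} (hj : j < k) :
    ∃ i : Fin (k - 1), Sum.inr (e, i) ∈ edgeOf G k (e, j) := by
  rcases Nat.eq_zero_or_pos j with rfl | h0
  · refine ⟨⟨0, by omega⟩, ?_⟩
    rw [edgeOf, Sym2.mem_iff]
    right
    rw [node_mid G k e (by omega) (by omega)]
    rfl
  · refine ⟨⟨j - 1, by omega⟩, ?_⟩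
    rw [edgeOf, Sym2.mem_iff]
    left
    rw [node_mid G k e h0 hj]

lemma edgeOf_inj {p q : G.edgeSet × ℕ} (hp : p.2 < k) (hq : q.2 < k)
    (h : edgeOf G k p = edgeOf G k q) : p = q := by
  obtain ⟨e, j⟩ := p
  obtain ⟨e', j'⟩ := q
  simp only at hp hq
  have hee : e = e' := by
    rcases lt_or_ge k 2 with hk1 | hk2
    · -- k = 1, j = j' = 0
      have hk1 : k = 1 := by omega
      subst hk1
      have hj0 : j = 0 := by omega
      have hj'0 : j' = 0 := by omega
      subst hj0; subst hj'0
      rw [edgeOf, edgeOf] at h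
      simp only [node_zero, node_top G 1 _ le_rfl le_rfl] at h
      have he : (e : Sym2 V) = (e' : Sym2 V) := by
        rcases Sym2.eq_iff.mp h with ⟨h1, h2⟩ | ⟨h1, h2⟩
        · rw [← Sym2.mk_inf_sup (e : Sym2 V), ← Sym2.mk_inf_sup (e' : Sym2 V),
            Sum.inl.inj h1, Sum.inl.inj h2]
        · rw [← Sym2.mk_inf_sup (e : Sym2 V), ← Sym2.mk_inf_sup (e' : Sym2 V),
            Sum.inl.inj h1, Sum.inl.inj h2, Sym2.eq_swap]
      exact Subtype.ext he
    · obtain ⟨i, hi⟩ := exists_inr_mem G k hk2 e hp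
      rw [h] at hi
      rw [edgeOf, Sym2.mem_iff] at hi
      rcases hi with hi | hi
      · exact (node_inr_eq G k hi.symm).symm
      · exact (node_inr_eq G k hi.symm).symm
  subst hee
  rw [edgeOf, edgeOf] at h
  rcases Sym2.eq_iff.mp h with ⟨h1, _⟩ | ⟨h1, h2⟩
  · have := node_inj G k e (by omega) (by omega) h1
    exact Prod.ext rfl this
  · have := node_inj G k e (by omega) (by omega) h1
    have := node_inj G k e (by omega) (by omega) h2
    omega

end Part3

section Part4
open SimpleGraph

variable {V : Type*} [Finite V] [LinearOrder V] (G : SimpleGraph V)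
  [Fintype G.edgeSet] (k : ℕ)

/-- The greatest `j ≤ n` with `j ∉ f e` (or `0` if none). -/
def gmax (f : G.edgeSet → Finset ℕ) (e : G.edgeSet) : ℕ → ℕ
  | 0 => 0
  | n + 1 => if n + 1 ∈ f e then gmax f e n else n + 1

omit [Finite V] [LinearOrder V] [Fintype G.edgeSet] in
lemma gmax_le (f : G.edgeSet → Finset ℕ) (e : G.edgeSet) (n : ℕ) : gmax G f e n ≤ n := by
  induction n with
  | zero => simp [gmax]
  | succ n ih =>
    rw [gmax]
    split_ifs
    · omega
    · exact le_rfl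

omit [Finite V] [LinearOrder V] [Fintype G.edgeSet] in
lemma gmax_spec (f : G.edgeSet → Finset ℕ) (e : G.edgeSet) {n : ℕ}
    (h : ∃ j, j ≤ n ∧ j ∉ f e) : gmax G f e n ∉ f e := by
  induction n with
  | zero =>
    obtain ⟨j, hj1, hj2⟩ := h
    have : j = 0 := by omega
    subst this
    simpa [gmax] using hj2
  | succ n ih =>
    rw [gmax]
    split_ifs with hm
    · apply ih
      obtain ⟨j, hj1, hj2⟩ := h
      refine ⟨j, ?_, hj2⟩
      rcases Nat.lt_succ_iff_lt_or_eq.mp (Nat.lt_succ_of_le hj1) with hlt | heq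
      · omega
      · exact absurd (heq ▸ hj2) (by simp [hm])
    · exact hm

omit [Finite V] [LinearOrder V] [Fintype G.edgeSet] in
lemma gmax_greatest (f : G.edgeSet → Finset ℕ) (e : G.edgeSet) {n x : ℕ}
    (h1 : gmax G f e n < x) (h2 : x ≤ n) : x ∈ f e := by
  induction n with
  | zero => omega
  | succ n ih =>
    rw [gmax] at h1
    split_ifs at h1 with hm
    · rcases Nat.lt_succ_iff_lt_or_eq.mp (Nat.lt_succ_of_le h2) with hlt | heq
      · exact ih h1 (by omega)
      · exact heq ▸ hm
    · omega

omit [Finite V] [LinearOrder V] [Fintype G.edgeSet] in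
lemma gmax_eq_self (f : G.edgeSet → Finset ℕ) (e : G.edgeSet) {n : ℕ}
    (h : n ∉ f e) : gmax G f e n = n := by
  cases n with
  | zero => rfl
  | succ n => rw [gmax, if_neg h]

omit [Finite V] [LinearOrder V] [Fintype G.edgeSet] in
lemma gmax_succ_mem (f : G.edgeSet → Finset ℕ) (e : G.edgeSet) {n : ℕ}
    (h : n + 1 ∈ f e) : gmax G f e (n + 1) = gmax G f e n := by
  rw [gmax, if_pos h]

/-- The set of edges of the subgraph of the stretch determined by `f`. -/
def SGfSet (f : G.edgeSet → Finset ℕ) : Set (Sym2 (V ⊕ (G.edgeSet × Fin (k - 1)))) :=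
  {q | ∃ e j, j ∈ f e ∧ j < k ∧ q = edgeOf G k (e, j)}

/-- The subgraph of the stretch determined by `f`. -/
def SGf (f : G.edgeSet → Finset ℕ) : SimpleGraph (V ⊕ (G.edgeSet × Fin (k - 1))) :=
  SimpleGraph.fromEdgeSet (SGfSet G k f)

/-- The set of fully-selected original edges. -/
def FF (f : G.edgeSet → Finset ℕ) : Finset (Sym2 V) :=
  (Finset.univ.filter fun e : G.edgeSet => f e = Finset.range k).image Subtype.val

/-- The corresponding subgraph of `G`. -/
def HH (f : G.edgeSet → Finset ℕ) : SimpleGraph V :=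
  SimpleGraph.fromEdgeSet (FF G k f)

/-- Index type for the middle path segments. -/
def Mid (f : G.edgeSet → Finset ℕ) : Type _ :=
  {p : G.edgeSet × Fin k // (p.2 : ℕ) ∉ f p.1 ∧
    ∃ j', (p.2 : ℕ) < j' ∧ j' < k ∧ j' ∉ f p.1}

instance (f : G.edgeSet → Finset ℕ) : Finite (Mid G k f) := by
  unfold Mid; infer_instance

open Classical in
/-- Value of the classifying map on internal vertices. -/
def phiInr (f : G.edgeSet → Finset ℕ) (e : G.edgeSet) (i : Fin (k - 1)) :
    (HH G k f).ConnectedComponent ⊕ Mid G k f :=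
  if h1 : ∃ j, j < (i : ℕ) + 1 ∧ j ∉ f e then
    if h2 : ∃ j, (i : ℕ) + 1 ≤ j ∧ j < k ∧ j ∉ f e then
      Sum.inr ⟨(e, ⟨gmax G f e (i : ℕ), by
          have := gmax_le G f e (i : ℕ)
          obtain ⟨j2, hj2a, hj2b, _⟩ := h2
          omega⟩), by
        refine ⟨?_, ?_⟩
        · obtain ⟨j0, hj0a, hj0b⟩ := h1
          exact gmax_spec G f e ⟨j0, by omega, hj0b⟩
        · obtain ⟨j2, hj2a, hj2b, hj2c⟩ := h2
          refine ⟨j2, ?_, hj2b, hj2c⟩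
          have := gmax_le G f e (i : ℕ)
          simp only [Fin.val_mk]
          omega⟩
    else Sum.inl ((HH G k f).connectedComponentMk (e : Sym2 V).sup)
  else Sum.inl ((HH G k f).connectedComponentMk (e : Sym2 V).inf)

/-- The classifying map. -/
def phi (f : G.edgeSet → Finset ℕ) :
    (V ⊕ (G.edgeSet × Fin (k - 1))) → ((HH G k f).ConnectedComponent ⊕ Mid G k f) :=
  Sum.elim (fun v => Sum.inl ((HH G k f).connectedComponentMk v))
    (fun p => phiInr G k f p.1 p.2)

lemma phi_inl (f : G.edgeSet → Finset ℕ) (v : V) :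
    phi G k f (Sum.inl v) = Sum.inl ((HH G k f).connectedComponentMk v) := rfl

lemma phi_inr (f : G.edgeSet → Finset ℕ) (e : G.edgeSet) (i : Fin (k - 1)) :
    phi G k f (Sum.inr (e, i)) = phiInr G k f e i := rfl

lemma phiInr_top (f : G.edgeSet → Finset ℕ) (e : G.edgeSet) (i : Fin (k - 1))
    (h1 : ¬ ∃ j, j < (i : ℕ) + 1 ∧ j ∉ f e) :
    phiInr G k f e i = Sum.inl ((HH G k f).connectedComponentMk (e : Sym2 V).inf) := by
  rw [phiInr, dif_neg h1]

lemma phiInr_bot (f : G.edgeSet → Finset ℕ) (e : G.edgeSet) (i : Fin (k - 1))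
    (h1 : ∃ j, j < (i : ℕ) + 1 ∧ j ∉ f e)
    (h2 : ¬ ∃ j, (i : ℕ) + 1 ≤ j ∧ j < k ∧ j ∉ f e) :
    phiInr G k f e i = Sum.inl ((HH G k f).connectedComponentMk (e : Sym2 V).sup) := by
  rw [phiInr, dif_pos h1, dif_neg h2]

lemma phiInr_mid (f : G.edgeSet → Finset ℕ) (e : G.edgeSet) (i : Fin (k - 1))
    (h1 : ∃ j, j < (i : ℕ) + 1 ∧ j ∉ f e)
    (h2 : ∃ j, (i : ℕ) + 1 ≤ j ∧ j < k ∧ j ∉ f e)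
    (hb : gmax G f e (i : ℕ) < k)
    (hc : (((⟨gmax G f e (i : ℕ), hb⟩ : Fin k)) : ℕ) ∉ f e ∧
      ∃ j', ((⟨gmax G f e (i : ℕ), hb⟩ : Fin k) : ℕ) < j' ∧ j' < k ∧ j' ∉ f e) :
    phiInr G k f e i = Sum.inr ⟨(e, ⟨gmax G f e (i : ℕ), hb⟩), hc⟩ := by
  rw [phiInr, dif_pos h1, dif_pos h2]

omit [Finite V] [LinearOrder V] [Fintype G.edgeSet] in
lemma ffull_of (f : G.edgeSet → Finset ℕ) (hf : ∀ e, f e ⊆ Finset.range k)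
    {e : G.edgeSet} (h : ∀ j, j < k → j ∈ f e) : f e = Finset.range k := by
  apply Finset.Subset.antisymm (hf e)
  intro j hj
  exact h j (Finset.mem_range.mp hj)

omit [Finite V] in
lemma HH_adj (f : G.edgeSet → Finset ℕ) {e : G.edgeSet} (h : f e = Finset.range k) :
    (HH G k f).Adj (e : Sym2 V).inf (e : Sym2 V).sup := by
  rw [HH, SimpleGraph.fromEdgeSet_adj]
  refine ⟨?_, Sym2.inf_ne_sup_of_not_isDiag (G.not_isDiag_of_mem_edgeSet e.2)⟩
  rw [Sym2.mk_inf_sup]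
  rw [Finset.mem_coe, FF, Finset.mem_image]
  exact ⟨e, by simp [h], rfl⟩

omit [Finite V] in
lemma HH_mk_inf_sup (f : G.edgeSet → Finset ℕ) {e : G.edgeSet}
    (h : f e = Finset.range k) :
    (HH G k f).connectedComponentMk (e : Sym2 V).inf =
      (HH G k f).connectedComponentMk (e : Sym2 V).sup :=
  SimpleGraph.ConnectedComponent.sound (HH_adj G k f h).reachable


/-- Moving one step along a selected edge of the path does not change `phiInr`. -/
lemma phiInr_step (f : G.edgeSet → Finset ℕ) (e : G.edgeSet) (i1 i2 : Fin (k - 1))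
    (hstep : (i2 : ℕ) = (i1 : ℕ) + 1) (hm : (i1 : ℕ) + 1 ∈ f e) :
    phiInr G k f e i1 = phiInr G k f e i2 := by
  have hC1 : (∃ x, x < (i2 : ℕ) + 1 ∧ x ∉ f e) ↔ (∃ x, x < (i1 : ℕ) + 1 ∧ x ∉ f e) := by
    constructor
    · rintro ⟨x, hx1, hx2⟩
      rcases Nat.lt_succ_iff_lt_or_eq.mp hx1 with h | h
      · exact ⟨x, by omega, hx2⟩
      · rw [h, hstep] at hx2
        exact absurd hm hx2
    · rintro ⟨x, hx1, hx2⟩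
      exact ⟨x, by omega, hx2⟩
  have hC2 : (∃ x, (i2 : ℕ) + 1 ≤ x ∧ x < k ∧ x ∉ f e) ↔
      (∃ x, (i1 : ℕ) + 1 ≤ x ∧ x < k ∧ x ∉ f e) := by
    constructor
    · rintro ⟨x, hx1, hx2, hx3⟩
      exact ⟨x, by omega, hx2, hx3⟩
    · rintro ⟨x, hx1, hx2, hx3⟩
      refine ⟨x, ?_, hx2, hx3⟩
      rcases eq_or_lt_of_le hx1 with h | h
      · exact absurd (h ▸ hm) hx3
      · omega
  by_cases h1 : ∃ x, x < (i1 : ℕ) + 1 ∧ x ∉ f e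
  · by_cases h2 : ∃ x, (i1 : ℕ) + 1 ≤ x ∧ x < k ∧ x ∉ f e
    · have hg : gmax G f e (i2 : ℕ) = gmax G f e (i1 : ℕ) := by
        rw [hstep]
        exact gmax_succ_mem G f e hm
      rw [phiInr, phiInr, dif_pos h1, dif_pos (hC1.mpr h1), dif_pos h2,
        dif_pos (hC2.mpr h2)]
      congr 1
      exact Subtype.ext (Prod.ext rfl (Fin.ext hg.symm))
    · rw [phiInr_bot G k f e i1 h1 h2,
        phiInr_bot G k f e i2 (hC1.mpr h1) (fun hx => h2 (hC2.mp hx))]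
  · rw [phiInr_top G k f e i1 h1, phiInr_top G k f e i2 (fun hx => h1 (hC1.mp hx))]

/-- The classifying map is constant on edges of the subgraph. -/
lemma phi_edge (f : G.edgeSet → Finset ℕ) (hf : ∀ e, f e ⊆ Finset.range k)
    (e : G.edgeSet) (j : ℕ) (hjf : j ∈ f e) (hjk : j < k) :
    phi G k f (stretchNode G k e j) = phi G k f (stretchNode G k e (j + 1)) := by
  by_cases hj0 : j = 0
  · subst hj0
    by_cases hk1 : k = 1
    · rw [node_zero, node_top G k e (by omega) (by omega), phi_inl, phi_inl]
      refine congrArg _ (HH_mk_inf_sup G k f (ffull_of G k f hf (fun x hx => ?_)))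
      have hx0 : x = 0 := by omega
      rw [hx0]
      exact hjf
    · rw [node_zero, node_mid G k e (by omega) (by omega), phi_inl, phi_inr]
      rw [phiInr_top]
      push_neg
      intro x hx
      have hx0 : x = 0 := by simpa using hx
      simpa [hx0] using hjf
  · have hj1 : 1 ≤ j := by omega
    have hiv : ((⟨j - 1, by omega⟩ : Fin (k - 1)) : ℕ) + 1 = j := by simp; omega
    by_cases hjk1 : j + 1 = k
    · rw [node_mid G k e (by omega) hjk, node_top G k e (by omega) (by omega),
        phi_inr, phi_inl]
      by_cases hlow : ∃ x, x < ((⟨j - 1, by omega⟩ : Fin (k - 1)) : ℕ) + 1 ∧ x ∉ f e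
      · rw [phiInr_bot]
        · exact hlow
        · push_neg
          intro x hx1 hx2
          have hxj : x = j := by omega
          rw [hxj]; exact hjf
      · rw [phiInr_top _ _ f e _ hlow]
        exact congrArg _ (HH_mk_inf_sup G k f (ffull_of G k f hf (fun x hx => by
          rcases lt_or_ge x j with h | h
          · by_contra hc
            exact hlow ⟨x, by omega, hc⟩
          · have hxj : x = j := by omega
            rw [hxj]; exact hjf)))
    · -- middle edge
      have hj2k : j + 1 < k := by omega
      rw [node_mid G k e (by omega) hjk, node_mid G k e (by omega) hj2k,
        phi_inr, phi_inr]
      refine phiInr_step G k f e _ _ ?_ ?_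
      · simp only [Fin.val_mk]
        omega
      · simp only [Fin.val_mk]
        rwa [Nat.sub_add_cancel hj1]

end Part4

section Part5
open SimpleGraph

variable {V : Type*} [Finite V] [LinearOrder V] (G : SimpleGraph V)
  [Fintype G.edgeSet] (k : ℕ)

lemma phi_surj (f : G.edgeSet → Finset ℕ) : Function.Surjective (phi G k f) := by
  rintro (c | m)
  · obtain ⟨v, rfl⟩ := c.exists_rep
    exact ⟨Sum.inl v, rfl⟩
  · obtain ⟨⟨e, jf⟩, hgap, hex⟩ := m
    obtain ⟨j', hj'1, hj'2, hj'3⟩ := hex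
    dsimp only at hgap hj'1 hj'2 hj'3 ⊢
    have hjfk : (jf : ℕ) < k - 1 := by omega
    refine ⟨Sum.inr (e, ⟨(jf : ℕ), hjfk⟩), ?_⟩
    rw [phi_inr]
    have h1 : ∃ x, x < ((⟨(jf : ℕ), hjfk⟩ : Fin (k - 1)) : ℕ) + 1 ∧ x ∉ f e :=
      ⟨(jf : ℕ), by simp only [Fin.val_mk]; omega, hgap⟩
    have h2 : ∃ x, ((⟨(jf : ℕ), hjfk⟩ : Fin (k - 1)) : ℕ) + 1 ≤ x ∧ x < k ∧ x ∉ f e :=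
      ⟨j', by simp only [Fin.val_mk]; omega, hj'2, hj'3⟩
    have hgv : gmax G f e ((⟨(jf : ℕ), hjfk⟩ : Fin (k - 1)) : ℕ) = (jf : ℕ) := by
      simp only [Fin.val_mk]
      exact gmax_eq_self G f e hgap
    have hb : gmax G f e ((⟨(jf : ℕ), hjfk⟩ : Fin (k - 1)) : ℕ) < k := by
      rw [hgv]; omega
    rw [phiInr_mid G k f e _ h1 h2 hb (by
      refine ⟨?_, ⟨j', ?_, hj'2, hj'3⟩⟩
      · simp only [Fin.val_mk]
        rw [hgv]; exact hgap
      · simp only [Fin.val_mk]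
        rw [hgv]; omega)]
    congr 1
    refine Subtype.ext (Prod.ext rfl (Fin.ext ?_))
    simp only [Fin.val_mk]
    rw [hgv]

lemma sgf_adj_nodes (f : G.edgeSet → Finset ℕ) (e : G.edgeSet) {j : ℕ}
    (hj : j ∈ f e) (hjk : j < k) :
    (SGf G k f).Adj (stretchNode G k e j) (stretchNode G k e (j + 1)) := by
  rw [SGf, SimpleGraph.fromEdgeSet_adj]
  exact ⟨⟨e, j, hj, hjk, rfl⟩, node_ne_next G k e hjk⟩

lemma reach_nodes (f : G.edgeSet → Finset ℕ) (e : G.edgeSet) (j : ℕ) :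
    ∀ d : ℕ, j + d ≤ k → (∀ x, j ≤ x → x < j + d → x ∈ f e) →
      (SGf G k f).Reachable (stretchNode G k e j) (stretchNode G k e (j + d)) := by
  intro d
  induction d with
  | zero => exact fun _ _ => SimpleGraph.Reachable.refl _
  | succ d ih =>
    intro hd hall
    refine SimpleGraph.Reachable.trans
      (ih (by omega) (fun x h1 h2 => hall x h1 (by omega))) ?_
    exact (sgf_adj_nodes G k f e (hall (j + d) (by omega) (by omega))
      (by omega)).reachable

lemma reach_nodes' (f : G.edgeSet → Finset ℕ) (e : G.edgeSet) {j j' : ℕ}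
    (hjj' : j ≤ j') (hk' : j' ≤ k) (hall : ∀ x, j ≤ x → x < j' → x ∈ f e) :
    (SGf G k f).Reachable (stretchNode G k e j) (stretchNode G k e j') := by
  have hjd : j + (j' - j) = j' := by omega
  rw [← hjd]
  exact reach_nodes G k f e j (j' - j) (by omega) (fun x h1 h2 => hall x h1 (by omega))

lemma reach_H_lift (f : G.edgeSet → Finset ℕ) (hk : 1 ≤ k) {u v : V}
    (h : (HH G k f).Reachable u v) :
    (SGf G k f).Reachable (Sum.inl u) (Sum.inl v) := by
  obtain ⟨p⟩ := h
  induction p with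
  | nil => exact SimpleGraph.Reachable.refl _
  | @cons u w v hadj q ih =>
    refine SimpleGraph.Reachable.trans ?_ ih
    rw [HH, SimpleGraph.fromEdgeSet_adj] at hadj
    obtain ⟨hmem, hne⟩ := hadj
    rw [Finset.mem_coe, FF, Finset.mem_image] at hmem
    obtain ⟨e, hefil, heq⟩ := hmem
    have hfull : f e = Finset.range k := (Finset.mem_filter.mp hefil).2
    have hreach0k : (SGf G k f).Reachable (stretchNode G k e 0) (stretchNode G k e k) :=
      reach_nodes' G k f e (by omega) le_rfl
        (fun x _ h2 => by rw [hfull]; exact Finset.mem_range.mpr h2)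
    rw [node_zero, node_top G k e hk le_rfl] at hreach0k
    have he2 : s(u, w) = s((e : Sym2 V).inf, (e : Sym2 V).sup) := by
      rw [Sym2.mk_inf_sup]; exact heq.symm
    rcases Sym2.eq_iff.mp he2 with ⟨h1, h2⟩ | ⟨h1, h2⟩
    · rw [h1, h2]
      exact hreach0k
    · rw [h1, h2]
      exact hreach0k.symm

lemma phi_fiber_reach (f : G.edgeSet → Finset ℕ) (w : V ⊕ (G.edgeSet × Fin (k - 1))) :
    (∀ c, phi G k f w = Sum.inl c →
      ∃ v, (HH G k f).connectedComponentMk v = c ∧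
        (SGf G k f).Reachable w (Sum.inl v)) ∧
    (∀ m : Mid G k f, phi G k f w = Sum.inr m →
      (SGf G k f).Reachable w (stretchNode G k m.1.1 ((m.1.2 : ℕ) + 1))) := by
  obtain (v | ⟨e, i⟩) := w
  · refine ⟨fun c hc => ⟨v, ?_, SimpleGraph.Reachable.refl _⟩, fun m hm => ?_⟩
    · exact Sum.inl.inj hc
    · rw [phi_inl] at hm
      exact absurd hm (by simp)
  · have hik : (i : ℕ) < k - 1 := i.2
    have hpk : (i : ℕ) + 1 < k := by omega
    have hw : stretchNode G k e ((i : ℕ) + 1) = Sum.inr (e, i) := by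
      rw [node_mid G k e (by omega) hpk]
      congr 1
    by_cases h1 : ∃ x, x < (i : ℕ) + 1 ∧ x ∉ f e
    · by_cases h2 : ∃ x, (i : ℕ) + 1 ≤ x ∧ x < k ∧ x ∉ f e
      · -- middle segment
        refine ⟨fun c hc => ?_, fun m hm => ?_⟩
        · rw [phi_inr, phiInr_mid G k f e i h1 h2 (by
              have := gmax_le G f e (i : ℕ); omega) (by
              refine ⟨?_, ?_⟩
              · obtain ⟨j0, hj0a, hj0b⟩ := h1
                exact gmax_spec G f e ⟨j0, by omega, hj0b⟩
              · obtain ⟨j2, hj2a, hj2b, hj2c⟩ := h2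
                refine ⟨j2, ?_, hj2b, hj2c⟩
                have := gmax_le G f e (i : ℕ)
                simp only [Fin.val_mk]
                omega)] at hc
          exact absurd hc (by simp)
        · rw [phi_inr, phiInr_mid G k f e i h1 h2 (by
              have := gmax_le G f e (i : ℕ); omega) (by
              refine ⟨?_, ?_⟩
              · obtain ⟨j0, hj0a, hj0b⟩ := h1
                exact gmax_spec G f e ⟨j0, by omega, hj0b⟩
              · obtain ⟨j2, hj2a, hj2b, hj2c⟩ := h2
                refine ⟨j2, ?_, hj2b, hj2c⟩
                have := gmax_le G f e (i : ℕ)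
                simp only [Fin.val_mk]
                omega)] at hm
          obtain rfl := Sum.inr.inj hm
          simp only [Fin.val_mk]
          rw [← hw]
          refine (reach_nodes' G k f e ?_ (by omega) ?_).symm
          · have := gmax_le G f e (i : ℕ)
            omega
          · intro x hx1 hx2
            exact gmax_greatest G f e (n := (i : ℕ)) (by omega) (by omega)
      · -- reaches sup
        refine ⟨fun c hc => ?_, fun m hm => ?_⟩
        · rw [phi_inr, phiInr_bot G k f e i h1 h2] at hc
          refine ⟨(e : Sym2 V).sup, (Sum.inl.inj hc), ?_⟩
          rw [← hw, ← node_top G k e (by omega) le_rfl]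
          refine reach_nodes' G k f e (by omega) le_rfl ?_
          intro x hx1 hx2
          by_contra hc'
          exact h2 ⟨x, hx1, hx2, hc'⟩
        · rw [phi_inr, phiInr_bot G k f e i h1 h2] at hm
          exact absurd hm (by simp)
    · -- reaches inf
      refine ⟨fun c hc => ?_, fun m hm => ?_⟩
      · rw [phi_inr, phiInr_top G k f e i h1] at hc
        refine ⟨(e : Sym2 V).inf, (Sum.inl.inj hc), ?_⟩
        rw [← hw, ← node_zero (G := G) (k := k) e]
        refine (reach_nodes' G k f e (by omega) (by omega) ?_).symm
        intro x hx1 hx2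
        by_contra hc'
        exact h1 ⟨x, by omega, hc'⟩
      · rw [phi_inr, phiInr_top G k f e i h1] at hm
        exact absurd hm (by simp)

lemma card_cc_SGf (f : G.edgeSet → Finset ℕ) (hf : ∀ e, f e ⊆ Finset.range k)
    (hk : 1 ≤ k) :
    Nat.card (SGf G k f).ConnectedComponent =
      Nat.card (HH G k f).ConnectedComponent + Nat.card (Mid G k f) := by
  rw [card_cc_eq (SGf G k f) (phi G k f) ?_ (phi_surj G k f) ?_, Nat.card_sum]
  · intro x y hadj
    rw [SGf, SimpleGraph.fromEdgeSet_adj] at hadj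
    obtain ⟨⟨e, j, hjf, hjk, heq⟩, hne⟩ := hadj
    rw [edgeOf] at heq
    rcases Sym2.eq_iff.mp heq with ⟨h1, h2⟩ | ⟨h1, h2⟩
    · rw [h1, h2]
      exact phi_edge G k f hf e j hjf hjk
    · rw [h1, h2]
      exact (phi_edge G k f hf e j hjf hjk).symm
  · intro x y h
    obtain ⟨hx1, hx2⟩ := phi_fiber_reach G k f x
    obtain ⟨hy1, hy2⟩ := phi_fiber_reach G k f y
    cases hpx : phi G k f x with
    | inl c =>
      have hpy : phi G k f y = Sum.inl c := by rw [← h, hpx]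
      obtain ⟨v, hv, rx⟩ := hx1 c hpx
      obtain ⟨v', hv', ry⟩ := hy1 c hpy
      exact rx.trans ((reach_H_lift G k f hk
        (SimpleGraph.ConnectedComponent.exact (hv.trans hv'.symm))).trans ry.symm)
    | inr m =>
      have hpy : phi G k f y = Sum.inr m := by rw [← h, hpx]
      exact (hx2 m hpx).trans (hy2 m hpy).symm

end Part5

section Part6
open SimpleGraph

variable {V : Type*} [Finite V] [LinearOrder V] (G : SimpleGraph V)
  [Fintype G.edgeSet] (k : ℕ)

/-- The weight giving the number of middle segments of one stretched edge. -/
def midw (S : Finset ℕ) : ℕ := if S = Finset.range k then 0 else k - S.card - 1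

lemma card_mid_single (f : G.edgeSet → Finset ℕ) (hf : ∀ e, f e ⊆ Finset.range k)
    (e : G.edgeSet) :
    Nat.card {jf : Fin k // (jf : ℕ) ∉ f e ∧
      ∃ j', (jf : ℕ) < j' ∧ j' < k ∧ j' ∉ f e} = midw k (f e) := by
  classical
  by_cases hfull : f e = Finset.range k
  · rw [midw, if_pos hfull]
    rw [Nat.card_eq_zero]
    left
    refine ⟨fun ⟨jf, h1, _⟩ => ?_⟩
    exact h1 (by rw [hfull]; exact Finset.mem_range.mpr jf.2)
  · rw [midw, if_neg hfull]
    set gaps : Finset ℕ := (Finset.range k).filter (· ∉ f e) with hgaps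
    have hgne : gaps.Nonempty := by
      by_contra hcon
      rw [Finset.not_nonempty_iff_eq_empty] at hcon
      refine hfull (Finset.Subset.antisymm (hf e) ?_)
      intro x hx
      by_contra hxe
      have : x ∈ gaps := by
        rw [hgaps, Finset.mem_filter]
        exact ⟨hx, hxe⟩
      rw [hcon] at this
      exact absurd this (Finset.notMem_empty x)
    set M := gaps.max' hgne with hM
    have hMmem : M ∈ gaps := gaps.max'_mem hgne
    have hMk : M < k := Finset.mem_range.mp (Finset.mem_filter.mp hMmem).1
    have hMgap : M ∉ f e := (Finset.mem_filter.mp hMmem).2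
    have he : Nat.card {jf : Fin k // (jf : ℕ) ∉ f e ∧
        ∃ j', (jf : ℕ) < j' ∧ j' < k ∧ j' ∉ f e} = (gaps.erase M).card := by
      rw [← Fintype.card_coe (gaps.erase M), ← Nat.card_eq_fintype_card]
      refine Nat.card_eq_of_bijective (fun jf => ⟨(jf : ℕ), ?_⟩) ⟨?_, ?_⟩
      · obtain ⟨jf, h1, j', hj'1, hj'2, hj'3⟩ := jf
        have hmem : (jf : ℕ) ∈ gaps := by
          rw [hgaps, Finset.mem_filter]
          exact ⟨Finset.mem_range.mpr jf.2, h1⟩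
        have hne : (jf : ℕ) ≠ M := by
          have hj'le : j' ≤ M := Finset.le_max' gaps j' (by
            rw [hgaps, Finset.mem_filter]
            exact ⟨Finset.mem_range.mpr hj'2, hj'3⟩)
          omega
        exact Finset.mem_erase.mpr ⟨hne, hmem⟩
      · rintro ⟨jf, h⟩ ⟨jf', h'⟩ heq
        simp only [Subtype.mk.injEq] at heq
        exact Subtype.ext (Fin.ext heq)
      · rintro ⟨n, hn⟩
        have hn' := Finset.mem_erase.mp hn
        have hnr : n ∈ Finset.range k := (Finset.mem_filter.mp hn'.2).1
        have hngap : n ∉ f e := (Finset.mem_filter.mp hn'.2).2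
        have hnM : n < M := by
          have := Finset.le_max' gaps n hn'.2
          rcases lt_or_eq_of_le this with h | h
          · exact h
          · exact absurd h hn'.1
        refine ⟨⟨⟨n, Finset.mem_range.mp hnr⟩, hngap, M, hnM, hMk, hMgap⟩, rfl⟩
    rw [he, Finset.card_erase_of_mem hMmem]
    have hgc : gaps.card = k - (f e).card := by
      rw [hgaps, Finset.filter_not, Finset.card_sdiff_of_subset]
      · rw [Finset.filter_mem_eq_inter, Finset.card_range,
          Finset.inter_eq_right.mpr (hf e)]
      · rw [Finset.filter_mem_eq_inter, Finset.inter_eq_right.mpr (hf e)]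
        exact hf e
    omega

lemma card_mid (f : G.edgeSet → Finset ℕ) (hf : ∀ e, f e ⊆ Finset.range k) :
    Nat.card (Mid G k f) = ∑ e : G.edgeSet, midw k (f e) := by
  classical
  rw [Mid, Nat.card_eq_of_bijective _
    (Equiv.subtypeProdEquivSigmaSubtype
      (fun (e : G.edgeSet) (jf : Fin k) => (jf : ℕ) ∉ f e ∧
        ∃ j', (jf : ℕ) < j' ∧ j' < k ∧ j' ∉ f e)).bijective]
  letI : ∀ e : G.edgeSet, Fintype {jf : Fin k // (jf : ℕ) ∉ f e ∧
      ∃ j', (jf : ℕ) < j' ∧ j' < k ∧ j' ∉ f e} := fun e => Fintype.ofFinite _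
  rw [Nat.card_eq_fintype_card]
  rw [Fintype.card_sigma]
  refine Finset.sum_congr rfl (fun e _ => ?_)
  rw [← card_mid_single G k f hf e, Nat.card_eq_fintype_card]

/-- The labels of selected stretch edges. -/
def PF (f : G.edgeSet → Finset ℕ) : Finset (G.edgeSet × ℕ) :=
  Finset.univ.biUnion (fun e => (f e).image (Prod.mk e))

lemma mem_PF (f : G.edgeSet → Finset ℕ) (p : G.edgeSet × ℕ) :
    p ∈ PF G f ↔ p.2 ∈ f p.1 := by
  obtain ⟨e, j⟩ := p
  simp only [PF, Finset.mem_biUnion, Finset.mem_univ, true_and, Finset.mem_image]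
  constructor
  · rintro ⟨e', j', hj', heq⟩
    obtain ⟨rfl, rfl⟩ := Prod.mk.inj heq
    exact hj'
  · intro hj
    exact ⟨e, j, hj, rfl⟩

lemma card_PF (f : G.edgeSet → Finset ℕ) :
    (PF G f).card = ∑ e : G.edgeSet, (f e).card := by
  classical
  rw [PF, Finset.card_biUnion]
  · refine Finset.sum_congr rfl (fun e _ => ?_)
    exact Finset.card_image_of_injective _ (fun a b h => (Prod.mk.inj h).2)
  · intro e _ e' _ hne
    rw [Function.onFun, Finset.disjoint_left]
    rintro p hp hp'
    obtain ⟨j, _, rfl⟩ := Finset.mem_image.mp hp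
    obtain ⟨j', _, heq⟩ := Finset.mem_image.mp hp'
    exact hne ((Prod.mk.inj heq).1.symm)

/-- The selected stretch edges. -/
def Phifin (f : G.edgeSet → Finset ℕ) : Finset (Sym2 (V ⊕ (G.edgeSet × Fin (k - 1)))) :=
  (PF G f).image (edgeOf G k)

lemma card_Phifin (f : G.edgeSet → Finset ℕ) (hf : ∀ e, f e ⊆ Finset.range k) :
    (Phifin G k f).card = ∑ e : G.edgeSet, (f e).card := by
  rw [Phifin, Finset.card_image_of_injOn, card_PF]
  intro p hp q hq heq
  rw [Finset.mem_coe, mem_PF] at hp hq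
  exact edgeOf_inj G k (Finset.mem_range.mp (hf _ hp)) (Finset.mem_range.mp (hf _ hq)) heq

lemma coe_Phifin (f : G.edgeSet → Finset ℕ) (hf : ∀ e, f e ⊆ Finset.range k) :
    (Phifin G k f : Set (Sym2 (V ⊕ (G.edgeSet × Fin (k - 1))))) = SGfSet G k f := by
  ext q
  rw [Finset.mem_coe, Phifin, Finset.mem_image]
  constructor
  · rintro ⟨⟨e, j⟩, hp, rfl⟩
    rw [mem_PF] at hp
    exact ⟨e, j, hp, Finset.mem_range.mp (hf _ hp), rfl⟩
  · rintro ⟨e, j, hj, hjk, rfl⟩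
    exact ⟨(e, j), (mem_PF G f (e, j)).mpr hj, rfl⟩

lemma stretch_eq_SGf_full : stretch G k = SGf G k (fun _ => Finset.range k) := by
  rw [stretch, SGf]
  congr 1
  ext q
  simp only [SGfSet, Set.mem_setOf_eq, Finset.mem_range, edgeOf]
  constructor
  · rintro ⟨e, j, hjk, rfl⟩
    exact ⟨e, j, hjk, hjk, rfl⟩
  · rintro ⟨e, j, hjk, _, rfl⟩
    exact ⟨e, j, hjk, rfl⟩

lemma HH_full : HH G k (fun _ => Finset.range k) = G := by
  rw [HH]
  have : (FF G k (fun _ => Finset.range k) : Set (Sym2 V)) = G.edgeSet := by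
    ext q
    rw [Finset.mem_coe, FF, Finset.mem_image]
    constructor
    · rintro ⟨e, _, rfl⟩
      exact e.2
    · intro hq
      exact ⟨⟨q, hq⟩, by simp, rfl⟩
  rw [this, SimpleGraph.fromEdgeSet_edgeSet]

instance : IsEmpty (Mid G k (fun _ => Finset.range k)) := by
  refine ⟨fun ⟨⟨e, jf⟩, h1, _⟩ => ?_⟩
  exact h1 (Finset.mem_range.mpr jf.2)

lemma card_cc_stretch (hk : 1 ≤ k) :
    Nat.card (stretch G k).ConnectedComponent = Nat.card G.ConnectedComponent := by
  rw [stretch_eq_SGf_full, card_cc_SGf G k _ (fun _ => Finset.Subset.refl _) hk,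
    HH_full, Nat.card_of_isEmpty (α := Mid G k fun _ => Finset.range k), add_zero]

lemma edgeSet_SGf (f : G.edgeSet → Finset ℕ) :
    (SGf G k f).edgeSet = SGfSet G k f := by
  rw [SGf, SimpleGraph.edgeSet_fromEdgeSet]
  ext q
  simp only [Set.mem_diff, Set.mem_setOf_eq, and_iff_left_iff_imp]
  rintro ⟨e, j, hj, hjk, rfl⟩
  exact edgeOf_not_isDiag G k hjk

end Part6

section Part7a
open SimpleGraph

lemma tutte_def {V : Type*} [Finite V] (G : SimpleGraph V) [inst : Fintype G.edgeSet]
    {K : Type*} [CommRing K] (x y : K) :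
    tutte G x y = ∑ A ∈ G.edgeFinset.powerset,
      (x - 1) ^ (nComp (A : Set (Sym2 V)) - nComp G.edgeSet) *
        (y - 1) ^ (nComp (A : Set (Sym2 V)) + A.card - Nat.card V) := by
  unfold _root_.tutte
  rw [show (Fintype.ofFinite G.edgeSet) = inst from Subsingleton.elim _ _]

/-- The little binomial-type identity `σ = 1 + a + ⋯ + a^(k-1)`. -/
lemma sigma_eq {K : Type*} [Field K] (a : K) (k : ℕ) (hk : 1 ≤ k) :
    ∑ S ∈ (Finset.range k).powerset.erase (Finset.range k),
        (a - 1) ^ (k - S.card - 1) =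
      ∑ j ∈ Finset.range k, a ^ j := by
  classical
  by_cases ha : a = 1
  · subst ha
    simp only [sub_self, one_pow, Finset.sum_const, smul_eq_mul, mul_one]
    have h1 : ∀ S ∈ (Finset.range k).powerset.erase (Finset.range k),
        (0 : K) ^ (k - S.card - 1) = if k - S.card - 1 = 0 then 1 else 0 := by
      intro S _
      exact zero_pow_eq _
    rw [Finset.sum_congr rfl h1, Finset.sum_boole]
    have h2 : ((Finset.range k).powerset.erase (Finset.range k)).filter
        (fun S => k - S.card - 1 = 0) = (Finset.range k).powersetCard (k - 1) := by
      ext S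
      rw [Finset.mem_filter, Finset.mem_erase, Finset.mem_powerset,
        Finset.mem_powersetCard]
      constructor
      · rintro ⟨⟨hne, hsub⟩, hcard⟩
        refine ⟨hsub, ?_⟩
        have hlt : S.card < k := by
          rcases lt_or_eq_of_le (Finset.card_le_card hsub) with h | h
          · simpa using h
          · exact absurd (Finset.eq_of_subset_of_card_le hsub (le_of_eq h.symm)) hne
        omega
      · rintro ⟨hsub, hcard⟩
        have hne : S ≠ Finset.range k := by
          intro hcon
          rw [hcon, Finset.card_range] at hcard
          omega
        exact ⟨⟨hne, hsub⟩, by omega⟩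
    have hch : k.choose (k - 1) = k := by
      rw [← Nat.choose_symm (by omega : k - 1 ≤ k)]
      have : k - (k - 1) = 1 := by omega
      rw [this, Nat.choose_one_right]
    rw [h2, Finset.card_powersetCard, Finset.card_range, hch]
    simp
  · have hane : a - 1 ≠ 0 := sub_ne_zero.mpr ha
    apply mul_right_cancel₀ hane
    rw [geom_sum_mul, Finset.sum_mul]
    have h1 : ∀ S ∈ (Finset.range k).powerset.erase (Finset.range k),
        (a - 1) ^ (k - S.card - 1) * (a - 1) = (a - 1) ^ (k - S.card) := by
      intro S hS
      rw [Finset.mem_erase, Finset.mem_powerset] at hS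
      have hlt : S.card < k := by
        rcases lt_or_eq_of_le (Finset.card_le_card hS.2) with h | h
        · simpa using h
        · exact absurd (Finset.eq_of_subset_of_card_le hS.2 (le_of_eq h.symm)) hS.1
      rw [← pow_succ]
      congr 1
      omega
    rw [Finset.sum_congr rfl h1]
    have h2 : ∑ S ∈ (Finset.range k).powerset.erase (Finset.range k),
          (a - 1) ^ (k - S.card) + (a - 1) ^ (k - (Finset.range k).card) =
        ∑ S ∈ (Finset.range k).powerset, (a - 1) ^ (k - S.card) :=
      Finset.sum_erase_add _ _ (Finset.mem_powerset_self _)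
    have h3 : ∑ S ∈ (Finset.range k).powerset, (a - 1) ^ (k - S.card) =
        ∑ S ∈ (Finset.range k).powerset, (a - 1) ^ S.card := by
      refine Finset.sum_nbij' (fun S => Finset.range k \ S) (fun S => Finset.range k \ S)
        ?_ ?_ ?_ ?_ ?_
      · intro S hS
        exact Finset.mem_powerset.mpr (Finset.sdiff_subset)
      · intro S hS
        exact Finset.mem_powerset.mpr (Finset.sdiff_subset)
      · intro S hS
        exact Finset.sdiff_sdiff_eq_self (Finset.mem_powerset.mp hS)
      · intro S hS
        exact Finset.sdiff_sdiff_eq_self (Finset.mem_powerset.mp hS)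
      · intro S hS
        rw [Finset.card_sdiff_of_subset (Finset.mem_powerset.mp hS), Finset.card_range]
    have h4 : ∑ S ∈ (Finset.range k).powerset, (a - 1) ^ S.card = a ^ k := by
      have := Finset.prod_add (fun _ : ℕ => a - 1) (fun _ : ℕ => (1 : K)) (Finset.range k)
      simp only [sub_add_cancel, Finset.prod_const, Finset.card_range, Finset.prod_const_one,
        one_pow, mul_one] at this
      exact this.symm
    rw [← h4, ← h3, ← h2]
    simp

lemma s_split {K : Type*} [Field K] (a : K) (k : ℕ) (hk : 1 ≤ k) :
    ∑ j ∈ Finset.range k, a ^ j = 1 + ∑ j ∈ Finset.Ico 1 k, a ^ j := by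
  rw [Finset.range_eq_Ico, Finset.sum_eq_sum_Ico_succ_bot (by omega : 0 < k), pow_zero]

end Part7a

section Part7b
open SimpleGraph

variable {V : Type*} [Finite V] [LinearOrder V] (G : SimpleGraph V)
  [Fintype G.edgeSet] (k : ℕ)

lemma edgeSet_stretch :
    (stretch G k).edgeSet = SGfSet G k (fun _ => Finset.range k) := by
  rw [stretch_eq_SGf_full, edgeSet_SGf]

open Classical in
/-- Recovering the selection function from an edge subset of the stretch. -/
def invf (A : Finset (Sym2 (V ⊕ (G.edgeSet × Fin (k - 1))))) : G.edgeSet → Finset ℕ :=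
  fun e => (Finset.range k).filter (fun j => edgeOf G k (e, j) ∈ A)

lemma reindex [Fintype (stretch G k).edgeSet] {M : Type*} [AddCommMonoid M]
    (w : Finset (Sym2 (V ⊕ (G.edgeSet × Fin (k - 1)))) → M) :
    ∑ A ∈ (stretch G k).edgeFinset.powerset, w A =
      ∑ f ∈ Fintype.piFinset (fun _ : G.edgeSet => (Finset.range k).powerset),
        w (Phifin G k f) := by
  classical
  have hright : ∀ A ∈ (stretch G k).edgeFinset.powerset, Phifin G k (invf G k A) = A := by
    intro A hA
    rw [Finset.mem_powerset] at hA
    ext q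
    constructor
    · intro hq
      obtain ⟨⟨e, j⟩, hp, rfl⟩ := Finset.mem_image.mp hq
      rw [mem_PF] at hp
      simp only [invf, Finset.mem_filter] at hp
      exact hp.2
    · intro hq
      have hq' : q ∈ (stretch G k).edgeSet := SimpleGraph.mem_edgeFinset.mp (hA hq)
      rw [edgeSet_stretch] at hq'
      obtain ⟨e, j, _, hjk, rfl⟩ := hq'
      refine Finset.mem_image.mpr ⟨(e, j), ?_, rfl⟩
      rw [mem_PF]
      simp only [invf, Finset.mem_filter]
      exact ⟨Finset.mem_range.mpr hjk, hq⟩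
  refine Finset.sum_nbij' (invf G k) (Phifin G k) ?_ ?_ ?_ ?_ ?_
  · intro A _
    rw [Fintype.mem_piFinset]
    intro e
    rw [Finset.mem_powerset]
    simp only [invf]
    exact Finset.filter_subset _ _
  · intro f hf
    rw [Fintype.mem_piFinset] at hf
    rw [Finset.mem_powerset]
    intro q hq
    obtain ⟨⟨e, j⟩, hp, rfl⟩ := Finset.mem_image.mp hq
    rw [mem_PF] at hp
    have hjk : j < k := Finset.mem_range.mp (Finset.mem_powerset.mp (hf e) hp)
    rw [SimpleGraph.mem_edgeFinset, edgeSet_stretch]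
    exact ⟨e, j, Finset.mem_range.mpr hjk, hjk, rfl⟩
  · exact hright
  · intro f hf
    rw [Fintype.mem_piFinset] at hf
    funext e
    ext j
    simp only [invf, Finset.mem_filter, Finset.mem_range]
    constructor
    · rintro ⟨hjk, hmem⟩
      obtain ⟨⟨e', j'⟩, hp, heq⟩ := Finset.mem_image.mp hmem
      rw [mem_PF] at hp
      have hj'k : j' < k := Finset.mem_range.mp (Finset.mem_powerset.mp (hf e') hp)
      obtain ⟨rfl, rfl⟩ := Prod.mk.inj (edgeOf_inj G k hj'k hjk heq)
      exact hp
    · intro hj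
      have hjk : j < k := Finset.mem_range.mp (Finset.mem_powerset.mp (hf e) hj)
      exact ⟨hjk, Finset.mem_image.mpr ⟨(e, j), (mem_PF G _ _).mpr hj, rfl⟩⟩
  · intro A hA
    rw [hright A hA]

lemma mem_FF (f : G.edgeSet → Finset ℕ) (q : Sym2 V) :
    q ∈ FF G k f ↔ ∃ e : G.edgeSet, f e = Finset.range k ∧ (e : Sym2 V) = q := by
  rw [FF, Finset.mem_image]
  constructor
  · rintro ⟨e, he, rfl⟩
    exact ⟨e, (Finset.mem_filter.mp he).2, rfl⟩
  · rintro ⟨e, he, rfl⟩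
    exact ⟨e, Finset.mem_filter.mpr ⟨Finset.mem_univ e, he⟩, rfl⟩

lemma card_FF (f : G.edgeSet → Finset ℕ) :
    (FF G k f).card =
      (Finset.univ.filter fun e : G.edgeSet => f e = Finset.range k).card :=
  Finset.card_image_of_injective _ Subtype.val_injective

lemma card_filter_val_mem (A : Finset (Sym2 V)) (hA : A ⊆ G.edgeFinset) :
    (Finset.univ.filter fun e : G.edgeSet => (e : Sym2 V) ∈ A).card = A.card := by
  classical
  have himg : (Finset.univ.filter fun e : G.edgeSet => (e : Sym2 V) ∈ A).image
      Subtype.val = A := by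
    ext q
    rw [Finset.mem_image]
    constructor
    · rintro ⟨e, he, rfl⟩
      exact (Finset.mem_filter.mp he).2
    · intro hq
      exact ⟨⟨q, SimpleGraph.mem_edgeFinset.mp (hA hq)⟩,
        Finset.mem_filter.mpr ⟨Finset.mem_univ _, hq⟩, rfl⟩
  conv_rhs => rw [← himg]
  rw [Finset.card_image_of_injective _ Subtype.val_injective]

lemma fiber_eq (A : Finset (Sym2 V)) (hA : A ⊆ G.edgeFinset) :
    (Fintype.piFinset (fun _ : G.edgeSet => (Finset.range k).powerset)).filter
        (fun f => FF G k f = A) =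
      Fintype.piFinset (fun e : G.edgeSet =>
        if (e : Sym2 V) ∈ A then {Finset.range k}
        else (Finset.range k).powerset.erase (Finset.range k)) := by
  classical
  ext f
  rw [Finset.mem_filter, Fintype.mem_piFinset, Fintype.mem_piFinset]
  constructor
  · rintro ⟨hf, hFF⟩
    intro e
    split_ifs with he
    · rw [← hFF, mem_FF] at he
      obtain ⟨e', he', heq⟩ := he
      have : e' = e := Subtype.val_injective heq
      rw [Finset.mem_singleton, ← this]
      exact he'
    · refine Finset.mem_erase.mpr ⟨?_, hf e⟩
      intro hcon
      exact he (hFF ▸ (mem_FF G k f _).mpr ⟨e, hcon, rfl⟩)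
  · intro h
    have hf : ∀ e, f e ∈ (Finset.range k).powerset := by
      intro e
      have he := h e
      split_ifs at he with hc
      · rw [Finset.mem_singleton] at he
        rw [he]
        exact Finset.mem_powerset_self _
      · exact Finset.mem_of_mem_erase he
    refine ⟨hf, ?_⟩
    ext q
    rw [mem_FF]
    constructor
    · rintro ⟨e, he, rfl⟩
      by_contra hcon
      have h2 := h e
      rw [if_neg hcon, Finset.mem_erase] at h2
      exact h2.1 he
    · intro hq
      have hqe : q ∈ G.edgeSet := SimpleGraph.mem_edgeFinset.mp (hA hq)
      refine ⟨⟨q, hqe⟩, ?_, rfl⟩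
      have h2 := h ⟨q, hqe⟩
      rw [if_pos hq, Finset.mem_singleton] at h2
      exact h2

end Part7b

/-- The `k`-stretch instance of Brylawski's tensor product formula: if
`s = 1 + a + ⋯ + a^(k−1) ≠ 0` then
`T(ᵏG; a, b) = s^(|E| − |V| + c(G)) · T(G; a^k, (b + a + ⋯ + a^(k−1))/s)`,
where `c(G)` is the number of connected components of `G`. -/
theorem tutte_stretch {V : Type*} [Finite V] [LinearOrder V] (G : SimpleGraph V)
    (k : ℕ) (hk : 1 ≤ k) {K : Type*} [Field K] (a b : K)
    (hs : (∑ j ∈ Finset.range k, a ^ j) ≠ 0) :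
    tutte (stretch G k) a b =
      (∑ j ∈ Finset.range k, a ^ j) ^
          (G.edgeSet.ncard + Nat.card G.ConnectedComponent - Nat.card V) *
        tutte G (a ^ k)
          ((b + ∑ j ∈ Finset.Ico 1 k, a ^ j) / (∑ j ∈ Finset.range k, a ^ j)) := by
  classical
  letI : Fintype G.edgeSet := Fintype.ofFinite _
  letI : Fintype (stretch G k).edgeSet := Fintype.ofFinite _
  set s : K := ∑ j ∈ Finset.range k, a ^ j with hsdef
  set n : ℕ := Nat.card V with hn
  set m : ℕ := Fintype.card G.edgeSet with hm
  set cG : ℕ := Nat.card G.ConnectedComponent with hcG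
  have hmncard : G.edgeSet.ncard = m := by
    rw [Set.ncard_eq_toFinset_card', Set.toFinset_card]
  have hmfin : G.edgeFinset.card = m := by
    rw [SimpleGraph.edgeFinset, Set.toFinset_card]
  have h_nCompStretch : nComp (stretch G k).edgeSet = cG := by
    rw [nComp, SimpleGraph.fromEdgeSet_edgeSet, card_cc_stretch G k hk]
  have h_nCompG : nComp G.edgeSet = cG := by
    rw [nComp, SimpleGraph.fromEdgeSet_edgeSet]
  have hW : Nat.card (V ⊕ (G.edgeSet × Fin (k - 1))) = n + m * (k - 1) := by
    rw [Nat.card_sum, Nat.card_prod, Nat.card_eq_fintype_card (α := G.edgeSet),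
      Nat.card_eq_fintype_card (α := Fin (k - 1)), Fintype.card_fin]
  have h4 : n ≤ m + cG := by
    have := card_le_nComp_add_card (Vt := V) G.edgeFinset
    rw [SimpleGraph.coe_edgeFinset, SimpleGraph.fromEdgeSet_edgeSet, ← hcG, ← hn,
      hmfin] at this
    omega
  have hy : (b + ∑ j ∈ Finset.Ico 1 k, a ^ j) / s - 1 = (b - 1) / s := by
    rw [div_sub_one hs]
    congr 1
    rw [hsdef, s_split a k hk]
    ring
  have hak : a ^ k - 1 = (a - 1) * s := by
    rw [hsdef, mul_comm, geom_sum_mul]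
  rw [tutte_def (stretch G k) a b, tutte_def G (a ^ k) _]
  rw [reindex G k (fun A => (a - 1) ^ (nComp (A : Set (Sym2 (V ⊕ (G.edgeSet × Fin (k - 1))))) -
      nComp (stretch G k).edgeSet) *
    (b - 1) ^ (nComp (A : Set (Sym2 (V ⊕ (G.edgeSet × Fin (k - 1))))) + A.card -
      Nat.card (V ⊕ (G.edgeSet × Fin (k - 1)))))]
  have hmaps : ∀ f ∈ Fintype.piFinset (fun _ : G.edgeSet => (Finset.range k).powerset),
      FF G k f ∈ G.edgeFinset.powerset := by
    intro f _
    rw [Finset.mem_powerset]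
    intro q hq
    obtain ⟨e, _, rfl⟩ := (mem_FF G k f q).mp hq
    exact SimpleGraph.mem_edgeFinset.mpr e.2
  rw [← Finset.sum_fiberwise_of_maps_to hmaps]
  rw [Finset.mul_sum]
  refine Finset.sum_congr rfl (fun A hA => ?_)
  have hA' : A ⊆ G.edgeFinset := Finset.mem_powerset.mp hA
  set pA : ℕ := nComp (A : Set (Sym2 V)) - cG with hpA
  set qA : ℕ := nComp (A : Set (Sym2 V)) + A.card - n with hqA
  have hccA : cG ≤ nComp (A : Set (Sym2 V)) := by
    rw [hcG, nComp]
    have hle : SimpleGraph.fromEdgeSet (A : Set (Sym2 V)) ≤ G := by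
      conv_rhs => rw [← SimpleGraph.fromEdgeSet_edgeSet (G := G)]
      refine SimpleGraph.fromEdgeSet_mono ?_
      rw [← SimpleGraph.coe_edgeFinset]
      exact Finset.coe_subset.mpr hA'
    exact card_cc_mono hle
  have hA2 : n ≤ nComp (A : Set (Sym2 V)) + A.card := card_le_nComp_add_card A
  have hA3 : A.card ≤ m := hmfin ▸ Finset.card_le_card hA'
  rw [fiber_eq G k A hA']
  -- rewrite each term of the inner sum
  have hterm : ∀ f ∈ Fintype.piFinset (fun e : G.edgeSet =>
      if (e : Sym2 V) ∈ A then {Finset.range k}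
      else (Finset.range k).powerset.erase (Finset.range k)),
      (a - 1) ^ (nComp ((Phifin G k f : Set (Sym2 (V ⊕ (G.edgeSet × Fin (k - 1)))))) -
          nComp (stretch G k).edgeSet) *
        (b - 1) ^ (nComp ((Phifin G k f : Set (Sym2 (V ⊕ (G.edgeSet × Fin (k - 1)))))) +
          (Phifin G k f).card - Nat.card (V ⊕ (G.edgeSet × Fin (k - 1)))) =
      ((a - 1) ^ pA * (b - 1) ^ qA) * ∏ e : G.edgeSet, (a - 1) ^ (midw k (f e)) := by
    intro f hfmem
    rw [← fiber_eq G k A hA', Finset.mem_filter, Fintype.mem_piFinset] at hfmem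
    obtain ⟨hpi, hFF⟩ := hfmem
    have hf : ∀ e, f e ⊆ Finset.range k := fun e => Finset.mem_powerset.mp (hpi e)
    have hc1 : nComp ((Phifin G k f : Set (Sym2 (V ⊕ (G.edgeSet × Fin (k - 1)))))) =
        nComp (A : Set (Sym2 V)) + ∑ e : G.edgeSet, midw k (f e) := by
      rw [nComp, coe_Phifin G k f hf, ← SGf, card_cc_SGf G k f hf hk,
        card_mid G k f hf, HH, ← hFF]
      rfl
    have hc2 : (Phifin G k f).card = ∑ e : G.edgeSet, (f e).card := card_Phifin G k f hf
    have hmid : (∑ e : G.edgeSet, midw k (f e)) + (∑ e : G.edgeSet, (f e).card) =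
        A.card + m * (k - 1) := by
      have hper : ∀ e : G.edgeSet, midw k (f e) + (f e).card =
          (k - 1) + (if f e = Finset.range k then 1 else 0) := by
        intro e
        rw [midw]
        split_ifs with hfe
        · rw [hfe, Finset.card_range]
          omega
        · have hlt : (f e).card < k := by
            rcases lt_or_eq_of_le (Finset.card_le_card (hf e)) with h | h
            · simpa using h
            · exact absurd (Finset.eq_of_subset_of_card_le (hf e) (le_of_eq h.symm)) hfe
          omega
      have hAc : (Finset.univ.filter fun e : G.edgeSet =>
          f e = Finset.range k).card = A.card := by
        rw [← card_FF, hFF]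
      calc (∑ e : G.edgeSet, midw k (f e)) + (∑ e : G.edgeSet, (f e).card)
          = ∑ e : G.edgeSet, (midw k (f e) + (f e).card) := by
            rw [Finset.sum_add_distrib]
        _ = ∑ e : G.edgeSet, ((k - 1) + (if f e = Finset.range k then 1 else 0)) := by
            exact Finset.sum_congr rfl (fun e _ => hper e)
        _ = m * (k - 1) + (Finset.univ.filter fun e : G.edgeSet =>
              f e = Finset.range k).card := by
            rw [Finset.sum_add_distrib, Finset.sum_const, Finset.card_univ, ← hm,
              smul_eq_mul]
            congr 1
            rw [Finset.sum_boole]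
            simp
        _ = A.card + m * (k - 1) := by rw [hAc]; ring
    have hexp1 : nComp ((Phifin G k f : Set (Sym2 (V ⊕ (G.edgeSet × Fin (k - 1)))))) -
        nComp (stretch G k).edgeSet = pA + ∑ e : G.edgeSet, midw k (f e) := by
      rw [hc1, h_nCompStretch, hpA]
      omega
    have hexp2 : nComp ((Phifin G k f : Set (Sym2 (V ⊕ (G.edgeSet × Fin (k - 1)))))) +
        (Phifin G k f).card - Nat.card (V ⊕ (G.edgeSet × Fin (k - 1))) = qA := by
      rw [hc1, hc2, hW, hqA]
      omega
    rw [hexp1, hexp2, pow_add, Finset.prod_pow_eq_pow_sum]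
    ring
  rw [Finset.sum_congr rfl hterm, ← Finset.mul_sum]
  have hswap : (∏ e : G.edgeSet, ∑ S ∈ (if (e : Sym2 V) ∈ A then {Finset.range k}
      else (Finset.range k).powerset.erase (Finset.range k)),
        (a - 1) ^ (midw k S)) =
      ∑ f ∈ Fintype.piFinset (fun e : G.edgeSet =>
        if (e : Sym2 V) ∈ A then {Finset.range k}
        else (Finset.range k).powerset.erase (Finset.range k)),
        ∏ e : G.edgeSet, (a - 1) ^ (midw k (f e)) :=
    Finset.prod_univ_sum _ _
  rw [← hswap]
  have hfac : ∀ e : G.edgeSet, (∑ S ∈ (if (e : Sym2 V) ∈ A then {Finset.range k}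
      else (Finset.range k).powerset.erase (Finset.range k)),
        (a - 1) ^ (midw k S)) = if (e : Sym2 V) ∈ A then 1 else s := by
    intro e
    split_ifs with he
    · rw [Finset.sum_singleton, midw, if_pos rfl, pow_zero]
    · rw [hsdef, ← sigma_eq a k hk]
      refine Finset.sum_congr rfl (fun S hS => ?_)
      rw [midw, if_neg (Finset.mem_erase.mp hS).1]
  rw [Finset.prod_congr rfl (fun e _ => hfac e), Finset.prod_ite,
    Finset.prod_const_one, one_mul, Finset.prod_const]
  have hcnt : (Finset.univ.filter fun e : G.edgeSet => ¬ (e : Sym2 V) ∈ A).card =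
      m - A.card := by
    have h1 := Finset.card_filter_add_card_filter_not
      (s := (Finset.univ : Finset G.edgeSet)) (fun e : G.edgeSet => (e : Sym2 V) ∈ A)
    rw [card_filter_val_mem G A hA', Finset.card_univ, ← hm] at h1
    omega
  rw [hcnt]
  -- final algebraic identity
  rw [hy, hak, h_nCompG]
  have hexp : (G.edgeSet.ncard + cG - n) + pA = (m - A.card) + qA := by
    rw [hmncard, hpA, hqA]
    omega
  have hsq : (s : K) ^ qA ≠ 0 := pow_ne_zero _ hs
  have key : s ^ (G.edgeSet.ncard + cG - n) * (((a - 1) * s) ^ pA * ((b - 1) / s) ^ qA) =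
      (a - 1) ^ pA * (b - 1) ^ qA * s ^ (m - A.card) := by
    rw [mul_pow, div_pow]
    rw [show s ^ (G.edgeSet.ncard + cG - n) * ((a - 1) ^ pA * s ^ pA *
        ((b - 1) ^ qA / s ^ qA)) =
      (s ^ (G.edgeSet.ncard + cG - n) * s ^ pA / s ^ qA) * ((a - 1) ^ pA * (b - 1) ^ qA)
      from by ring]
    rw [← pow_add, hexp, pow_add, mul_div_assoc, div_self hsq, mul_one]
    ring
  rw [← key]
end
end

section
/- Let G = (V,E) be a finite simple graph, and let a, b be elements of a field K with 1 + b ≠ 0. Then the 2-thickening _2G satisfies T(_2G; a, b) = (1+b)^{|V| − c(G)} · T(G; (a+b)/(1+b), b²), where c(G) is the number of connected components of G. -/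
noncomputable section

/-- For a multigraph given by an endpoint map `ends : E → Sym2 V` and a set `A`
of edge indices, the number of connected components of the graph on `V` in
which two distinct vertices are adjacent iff some edge index in `A` has them as
its endpoints. -/
def mComp {V E : Type*} [Finite V] (ends : E → Sym2 V) (A : Set E) : ℕ :=
  Nat.card (SimpleGraph.fromEdgeSet (ends '' A)).ConnectedComponent

/-- The Tutte polynomial
`T(G; x, y) = Σ_{A ⊆ E} (x−1)^(c(A)−c(E)) (y−1)^(c(A)+|A|−|V|)` of a finite
multigraph with vertex set `V`, edge index set `E` and endpoint map `ends`,
evaluated at a point of a commutative ring (both exponents are nonnegative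
integers). -/
def mTutte {V E : Type*} [Finite V] [Finite E] (ends : E → Sym2 V)
    {K : Type*} [CommRing K] (x y : K) : K := by
  classical
  letI : Fintype E := Fintype.ofFinite E
  exact ∑ A : Finset E,
    (x - 1) ^ (mComp ends (A : Set E) - mComp ends Set.univ) *
      (y - 1) ^ (mComp ends (A : Set E) + A.card - Nat.card V)

section aux

open SimpleGraph Finset

set_option linter.unusedSectionVars false

lemma mTutte_def' {V E : Type*} [Finite V] [Finite E] [ft : Fintype E] {K : Type*} [CommRing K]
    (ends : E → Sym2 V) (x y : K) :
    mTutte ends x y = ∑ A : Finset E,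
      (x - 1) ^ (mComp ends (A : Set E) - mComp ends Set.univ) *
        (y - 1) ^ (mComp ends (A : Set E) + A.card - Nat.card V) := by
  unfold mTutte
  have : Fintype.ofFinite E = ft := Subsingleton.elim _ _
  rw [this]

variable {V : Type*} [Finite V]

/-- number of components of the graph from an edge set -/
private def ccomp (s : Set (Sym2 V)) : ℕ :=
  Nat.card (SimpleGraph.fromEdgeSet s).ConnectedComponent

private lemma ccomp_mono {s t : Set (Sym2 V)} (h : s ⊆ t) : ccomp t ≤ ccomp s := by
  have hle : fromEdgeSet s ≤ fromEdgeSet t := fromEdgeSet_mono h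
  apply Nat.card_le_card_of_surjective
    (ConnectedComponent.map (Hom.ofLE hle))
  intro c
  obtain ⟨v, rfl⟩ := c.exists_rep
  exact ⟨(fromEdgeSet s).connectedComponentMk v, ConnectedComponent.map_mk _ _⟩

private lemma ccomp_empty : ccomp (∅ : Set (Sym2 V)) = Nat.card V := by
  rw [ccomp, fromEdgeSet_empty]
  refine (Nat.card_eq_of_bijective (fun v => (⊥ : SimpleGraph V).connectedComponentMk v)
    ⟨?_, ?_⟩).symm
  · intro v w h
    exact (reachable_bot).mp (ConnectedComponent.eq.mp h)
  · intro c; obtain ⟨v, rfl⟩ := c.exists_rep; exact ⟨v, rfl⟩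

private lemma ccomp_le_card (s : Set (Sym2 V)) : ccomp s ≤ Nat.card V := by
  rw [← ccomp_empty]; exact ccomp_mono (Set.empty_subset s)

private lemma walk_cases {s : Set (Sym2 V)} {u u' v w : V}
    (p : (fromEdgeSet (insert s(u, u') s)).Walk v w) :
    (fromEdgeSet s).Reachable v w ∨
      ((fromEdgeSet s).Reachable v u ∧ (fromEdgeSet s).Reachable u' w) ∨
      ((fromEdgeSet s).Reachable v u' ∧ (fromEdgeSet s).Reachable u w) := by
  induction p with
  | nil => exact Or.inl (Reachable.refl _)
  | @cons v v₂ w ha p ih =>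
    rw [fromEdgeSet_adj, Set.mem_insert_iff] at ha
    obtain ⟨hmem | hmem, hne⟩ := ha
    · rw [Sym2.eq_iff] at hmem
      rcases hmem with ⟨rfl, rfl⟩ | ⟨rfl, rfl⟩
      · rcases ih with h | ⟨h1, h2⟩ | ⟨h1, h2⟩
        · exact Or.inr (Or.inl ⟨Reachable.refl _, h⟩)
        · exact Or.inl (h1.symm.trans h2)
        · exact Or.inl h2
      · rcases ih with h | ⟨h1, h2⟩ | ⟨h1, h2⟩
        · exact Or.inr (Or.inr ⟨Reachable.refl _, h⟩)
        · exact Or.inl h2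
        · exact Or.inl (h1.symm.trans h2)
    · have hr : (fromEdgeSet s).Reachable v v₂ :=
        ((fromEdgeSet_adj s).mpr ⟨hmem, hne⟩).reachable
      rcases ih with h | ⟨h1, h2⟩ | ⟨h1, h2⟩
      · exact Or.inl (hr.trans h)
      · exact Or.inr (Or.inl ⟨hr.trans h1, h2⟩)
      · exact Or.inr (Or.inr ⟨hr.trans h1, h2⟩)

private lemma ccomp_insert (x : Sym2 V) (s : Set (Sym2 V)) :
    ccomp s ≤ ccomp (insert x s) + 1 := by
  classical
  induction x with
  | _ u u' =>
  set Gs := fromEdgeSet s with hGs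
  set Gt := fromEdgeSet (insert s(u, u') s) with hGt
  have hle : Gs ≤ Gt := fromEdgeSet_mono (Set.subset_insert _ _)
  let f : Gs.ConnectedComponent → Gt.ConnectedComponent :=
    ConnectedComponent.map (Hom.ofLE hle)
  have hmapmk : ∀ v : V, f (Gs.connectedComponentMk v) = Gt.connectedComponentMk v :=
    fun v => ConnectedComponent.map_mk _ _
  let ι : Gs.ConnectedComponent → Gt.ConnectedComponent ⊕ Unit :=
    fun c => if c = Gs.connectedComponentMk u then Sum.inr () else Sum.inl (f c)
  have key : ∀ d d' : Gs.ConnectedComponent, d ≠ Gs.connectedComponentMk u →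
      d' ≠ Gs.connectedComponentMk u → f d = f d' → d = d' := by
    intro d d' h1 h2 hf
    obtain ⟨v, rfl⟩ := d.exists_rep
    obtain ⟨v', rfl⟩ := d'.exists_rep
    have hf' : Gt.connectedComponentMk v = Gt.connectedComponentMk v' :=
      (hmapmk v).symm.trans (hf.trans (hmapmk v'))
    obtain ⟨p⟩ := ConnectedComponent.eq.mp hf'
    rcases walk_cases p with hh | ⟨ha, hbb⟩ | ⟨ha, hbb⟩
    · exact ConnectedComponent.eq.mpr hh
    · exact absurd (ConnectedComponent.eq.mpr ha) h1
    · exact absurd (ConnectedComponent.eq.mpr hbb.symm) h2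
  have hinj : Function.Injective ι := by
    intro c c' h
    by_cases h1 : c = Gs.connectedComponentMk u <;>
      by_cases h2 : c' = Gs.connectedComponentMk u
    · exact h1.trans h2.symm
    · simp only [ι, if_pos h1, if_neg h2] at h; exact absurd h (by simp)
    · simp only [ι, if_neg h1, if_pos h2] at h; exact absurd h (by simp)
    · simp only [ι, if_neg h1, if_neg h2, Sum.inl.injEq] at h
      exact key c c' h1 h2 h
  calc ccomp s = Nat.card Gs.ConnectedComponent := rfl
    _ ≤ Nat.card (Gt.ConnectedComponent ⊕ Unit) := Nat.card_le_card_of_injective ι hinj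
    _ = ccomp (insert s(u,u') s) + 1 := by
        rw [Nat.card_sum]
        have h1 : Nat.card Unit = 1 := Nat.card_unique
        rw [h1]; rfl

private lemma ccomp_add_card {E : Type*} (ends : E → Sym2 V) (A : Finset E) [DecidableEq E] :
    Nat.card V ≤ ccomp (ends '' (A : Set E)) + A.card := by
  induction A using Finset.induction_on with
  | empty => simp [ccomp_empty]
  | @insert e A he ih =>
    rw [Finset.coe_insert, Set.image_insert_eq, Finset.card_insert_of_notMem he]
    have := ccomp_insert (ends e) (ends '' (A : Set E))
    omega

private lemma mComp_eq_ccomp {E : Type*} (ends : E → Sym2 V) (A : Set E) :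
    mComp ends A = ccomp (ends '' A) := rfl

private lemma lhs_eq {E : Type*} [Fintype E] [DecidableEq E]
    (ends : E → Sym2 V) {K : Type*} [CommRing K] (a b : K) :
    ∑ B : Finset (E × Fin 2),
      (a - 1) ^ (mComp (fun p : E × Fin 2 => ends p.1) (B : Set (E × Fin 2)) -
          mComp (fun p : E × Fin 2 => ends p.1) Set.univ) *
        (b - 1) ^ (mComp (fun p : E × Fin 2 => ends p.1) (B : Set (E × Fin 2)) + B.card - Nat.card V) =
    ∑ A : Finset E,
      (a - 1) ^ (mComp ends (A : Set E) - mComp ends Set.univ) *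
        ((b - 1) ^ (mComp ends (A : Set E) + A.card - Nat.card V) * (1 + b) ^ A.card) := by
  classical
  have hNle : ∀ A : Finset E, Nat.card V ≤ mComp ends (A : Set E) + A.card := by
    intro A; rw [mComp_eq_ccomp]; exact ccomp_add_card ends A
  let Ψ : (E → Finset (Fin 2)) ≃ Finset (E × Fin 2) :=
    { toFun := fun g => univ.filter (fun p : E × Fin 2 => p.2 ∈ g p.1)
      invFun := fun B e => univ.filter (fun i => (e, i) ∈ B)
      left_inv := by intro g; funext e; ext i; simp
      right_inv := by intro B; ext p; simp }
  rw [← Equiv.sum_comp Ψ]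
  have hBuniv : mComp (fun p : E × Fin 2 => ends p.1) Set.univ = mComp ends Set.univ := by
    unfold mComp
    rw [Set.image_univ, Set.image_univ,
      show (fun p : E × Fin 2 => ends p.1) = ends ∘ Prod.fst from rfl, Set.range_comp,
      Prod.fst_surjective.range_eq, Set.image_univ]
  have hcard : ∀ g : E → Finset (Fin 2), (Ψ g).card = ∑ e, (g e).card := by
    intro g
    show (univ.filter (fun p : E × Fin 2 => p.2 ∈ g p.1)).card = _
    rw [card_filter, Fintype.sum_prod_type]
    refine Finset.sum_congr rfl fun e _ => ?_
    simp [Finset.sum_ite_mem]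
  have himg : ∀ g : E → Finset (Fin 2),
      (fun p : E × Fin 2 => ends p.1) '' ((Ψ g : Finset (E × Fin 2)) : Set (E × Fin 2)) =
        ends '' ((univ.filter (fun e => g e ≠ ∅) : Finset E) : Set E) := by
    intro g
    ext x
    simp only [Set.mem_image, Finset.mem_coe, Finset.mem_filter, Finset.mem_univ, true_and]
    constructor
    · rintro ⟨⟨e, i⟩, hi, rfl⟩
      have hi' : i ∈ g e := by
        have := hi
        simp only [Ψ, Equiv.coe_fn_mk, Finset.mem_coe, Finset.mem_filter, Finset.mem_univ,
          true_and] at this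
        exact this
      exact ⟨e, Finset.ne_empty_of_mem hi', rfl⟩
    · rintro ⟨e, hne, rfl⟩
      obtain ⟨i, hi⟩ := Finset.nonempty_iff_ne_empty.mpr hne
      refine ⟨(e, i), ?_, rfl⟩
      simp only [Ψ, Equiv.coe_fn_mk, Finset.mem_coe, Finset.mem_filter, Finset.mem_univ, true_and]
      exact hi
  have hsummand : ∀ g : E → Finset (Fin 2),
      (a - 1) ^ (mComp (fun p : E × Fin 2 => ends p.1) ((Ψ g : Finset (E × Fin 2)) : Set (E × Fin 2)) -
          mComp (fun p : E × Fin 2 => ends p.1) Set.univ) *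
        (b - 1) ^ (mComp (fun p : E × Fin 2 => ends p.1) ((Ψ g : Finset (E × Fin 2)) : Set (E × Fin 2))
          + (Ψ g).card - Nat.card V) =
      (a - 1) ^ (mComp ends ((univ.filter (fun e => g e ≠ ∅) : Finset E) : Set E) - mComp ends Set.univ) *
        (b - 1) ^ (mComp ends ((univ.filter (fun e => g e ≠ ∅) : Finset E) : Set E)
          + ∑ e, (g e).card - Nat.card V) := by
    intro g
    rw [hcard g, hBuniv]
    unfold mComp
    rw [himg g]
  rw [Finset.sum_congr rfl fun g _ => hsummand g]
  refine Eq.trans (Finset.sum_fiberwise_of_maps_to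
    (g := fun g : E → Finset (Fin 2) => univ.filter fun e => g e ≠ ∅)
    (t := univ) (fun i _ => mem_univ _) _).symm ?_
  refine Finset.sum_congr rfl fun A _ => ?_
  have hfib : univ.filter (fun g : E → Finset (Fin 2) => univ.filter (fun e => g e ≠ ∅) = A) =
      Fintype.piFinset (fun e => if e ∈ A then univ.filter (fun s : Finset (Fin 2) => s ≠ ∅)
        else {∅}) := by
    ext g
    simp only [Finset.mem_filter, Finset.mem_univ, true_and, Fintype.mem_piFinset]
    constructor
    · intro h
      have h' : ∀ e, g e ≠ ∅ ↔ e ∈ A := by intro e; rw [← h]; simp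
      intro e
      by_cases he : e ∈ A
      · simp [he, (h' e).mpr he]
      · simp only [he, if_neg, if_false, Finset.mem_singleton]
        by_contra hne
        exact he ((h' e).mp hne)
    · intro h
      ext e
      simp only [Finset.mem_filter, Finset.mem_univ, true_and]
      specialize h e
      by_cases he : e ∈ A <;> simp [he] at h <;> simp [he, h]
  calc (∑ g ∈ univ.filter (fun g : E → Finset (Fin 2) => univ.filter (fun e => g e ≠ ∅) = A),
        (a - 1) ^ (mComp ends ((univ.filter (fun e => g e ≠ ∅) : Finset E) : Set E) - mComp ends Set.univ) *
          (b - 1) ^ (mComp ends ((univ.filter (fun e => g e ≠ ∅) : Finset E) : Set E)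
            + ∑ e, (g e).card - Nat.card V))
      = ∑ g ∈ univ.filter (fun g : E → Finset (Fin 2) => univ.filter (fun e => g e ≠ ∅) = A),
        (a - 1) ^ (mComp ends (A : Set E) - mComp ends Set.univ) *
          ((b - 1) ^ (mComp ends (A : Set E) + A.card - Nat.card V) *
            ∏ e, (if e ∈ A then (b - 1) ^ ((g e).card - 1) else 1)) := by
        refine Finset.sum_congr rfl fun g hg => ?_
        rw [Finset.mem_filter] at hg
        have hsupp : univ.filter (fun e => g e ≠ ∅) = A := hg.2
        have hon : ∀ e ∈ A, g e ≠ ∅ := by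
          intro e he; rw [← hsupp] at he; exact (Finset.mem_filter.mp he).2
        have hoff : ∀ e, e ∉ A → g e = ∅ := by
          intro e he; by_contra hne
          exact he (hsupp ▸ Finset.mem_filter.mpr ⟨mem_univ _, hne⟩)
        have hsum : ∑ e, (g e).card = ∑ e ∈ A, (g e).card :=
          (Finset.sum_subset (Finset.subset_univ A)
            (fun e _ he => by rw [hoff e he]; rfl)).symm
        have hsum2 : ∑ e ∈ A, (g e).card = (∑ e ∈ A, ((g e).card - 1)) + A.card := by
          conv_rhs => rw [Finset.card_eq_sum_ones A]
          rw [← Finset.sum_add_distrib]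
          exact Finset.sum_congr rfl fun e he => (Nat.sub_add_cancel
            (Finset.card_pos.mpr (Finset.nonempty_iff_ne_empty.mpr (hon e he)))).symm
        have hexp : mComp ends (A : Set E) + ∑ e, (g e).card - Nat.card V
            = (mComp ends (A : Set E) + A.card - Nat.card V) + ∑ e ∈ A, ((g e).card - 1) := by
          rw [hsum, hsum2]
          have := hNle A
          omega
        have hprod : ∏ e, (if e ∈ A then (b - 1) ^ ((g e).card - 1) else 1)
            = (b - 1) ^ (∑ e ∈ A, ((g e).card - 1)) := by
          rw [Finset.prod_ite_mem, Finset.univ_inter, Finset.prod_pow_eq_pow_sum]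
        rw [hsupp, hexp, pow_add, hprod]
    _ = (a - 1) ^ (mComp ends (A : Set E) - mComp ends Set.univ) *
          ((b - 1) ^ (mComp ends (A : Set E) + A.card - Nat.card V) *
            ∑ g ∈ univ.filter (fun g : E → Finset (Fin 2) => univ.filter (fun e => g e ≠ ∅) = A),
              ∏ e, (if e ∈ A then (b - 1) ^ ((g e).card - 1) else 1)) := by
        rw [← Finset.mul_sum, ← Finset.mul_sum]
    _ = (a - 1) ^ (mComp ends (A : Set E) - mComp ends Set.univ) *
        ((b - 1) ^ (mComp ends (A : Set E) + A.card - Nat.card V) * (1 + b) ^ A.card) := by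
        congr 1
        congr 1
        rw [hfib, ← Finset.prod_univ_sum
          (fun e => if e ∈ A then univ.filter (fun s : Finset (Fin 2) => s ≠ ∅) else {∅})
          (fun e j => if e ∈ A then (b - 1) ^ (j.card - 1) else 1)]
        calc (∏ e, ∑ j ∈ (if e ∈ A then univ.filter (fun s : Finset (Fin 2) => s ≠ ∅) else {∅}),
              (if e ∈ A then (b - 1) ^ (j.card - 1) else 1))
            = ∏ e, (if e ∈ A then (1 + b) else 1) := by
              refine Finset.prod_congr rfl fun e _ => ?_
              by_cases he : e ∈ A
              · simp only [he, if_true]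
                have hset : (univ.filter (fun s : Finset (Fin 2) => s ≠ ∅))
                    = {{0}, {1}, {0, 1}} := by decide
                rw [hset]
                rw [Finset.sum_insert (by decide), Finset.sum_insert (by decide),
                  Finset.sum_singleton]
                norm_num
              · simp [he]
          _ = (1 + b) ^ A.card := by
              rw [Finset.prod_ite_mem, Finset.univ_inter, Finset.prod_const]

end aux

open SimpleGraph Finset

/-- The 2-thickening instance of Brylawski's tensor product formula: for a
finite simple graph `G` (viewed as the multigraph with edge index set
`G.edgeSet`), if `1 + b ≠ 0` then the 2-thickening `₂G` — the multigraph with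
edge index set `G.edgeSet × Fin 2`, both copies of an edge having the same
endpoints — satisfies
`T(₂G; a, b) = (1+b)^(|V| − c(G)) · T(G; (a+b)/(1+b), b²)`, where `c(G)` is the
number of connected components of `G`. -/
theorem tutte_twoThickening {V : Type*} [Finite V] (G : SimpleGraph V)
    {K : Type*} [Field K] (a b : K) (hb : (1 : K) + b ≠ 0) :
    mTutte (fun p : G.edgeSet × Fin 2 => (p.1 : Sym2 V)) a b =
      (1 + b) ^ (Nat.card V - Nat.card G.ConnectedComponent) *
        mTutte (fun e : G.edgeSet => (e : Sym2 V)) ((a + b) / (1 + b)) (b ^ 2) := by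
  classical
  letI : Fintype ↥G.edgeSet := Fintype.ofFinite _
  set ends : ↥G.edgeSet → Sym2 V := fun e => (e : Sym2 V) with hends
  rw [mTutte_def', mTutte_def']
  have hGC : Nat.card G.ConnectedComponent = mComp ends Set.univ := by
    rw [mComp_eq_ccomp, Set.image_univ,
      show Set.range ends = G.edgeSet from Subtype.range_coe]
    unfold ccomp
    rw [fromEdgeSet_edgeSet]
  rw [hGC]
  rw [lhs_eq ends a b, Finset.mul_sum]
  refine Finset.sum_congr rfl fun A _ => ?_
  have h1 : mComp ends Set.univ ≤ mComp ends (A : Set ↥G.edgeSet) := by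
    rw [mComp_eq_ccomp, mComp_eq_ccomp]
    exact ccomp_mono (Set.image_mono (Set.subset_univ _))
  have h2 : mComp ends (A : Set ↥G.edgeSet) ≤ Nat.card V := by
    rw [mComp_eq_ccomp]; exact ccomp_le_card _
  have h3 : Nat.card V ≤ mComp ends (A : Set ↥G.edgeSet) + A.card := by
    rw [mComp_eq_ccomp]; exact ccomp_add_card ends A
  set c := mComp ends (A : Set ↥G.edgeSet) with hc
  set cE := mComp ends Set.univ with hcE
  set N := Nat.card V with hN
  set k := A.card with hk
  have hx : (a + b) / (1 + b) - 1 = (a - 1) / (1 + b) := by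
    field_simp
    ring
  have hy : b ^ 2 - 1 = (b - 1) * (1 + b) := by ring
  rw [hx, hy, div_pow, mul_pow]
  have hbne : (1 + b) ^ (c - cE) ≠ 0 := pow_ne_zero _ hb
  have hkey : (a - 1) ^ (c - cE) / (1 + b) ^ (c - cE) * (1 + b) ^ (c - cE)
      = (a - 1) ^ (c - cE) := div_mul_cancel₀ _ hbne
  have hpowadd : (1 + b) ^ (N - cE) * (1 + b) ^ (c + k - N)
      = (1 + b) ^ (c - cE) * (1 + b) ^ k := by
    rw [← pow_add, ← pow_add]
    congr 1
    omega
  apply mul_right_cancel₀ hbne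
  linear_combination (-((a - 1) ^ (c - cE) * (b - 1) ^ (c + k - N))) * hpowadd +
    (-((b - 1) ^ (c + k - N) * (1 + b) ^ (N - cE) * (1 + b) ^ (c + k - N))) * hkey
end
end

section
/- Let G = (V,E) be a finite simple graph in which every vertex has odd degree. Then for every A ⊆ E such that every vertex has even degree in the spanning subgraph (V,A) (a 'closed subgraph'), one has |A| ≤ |E| − |V|/2; moreover, such an A satisfies |A| = |E| − |V|/2 if and only if E ∖ A is a perfect matching of G. Consequently, if G has a perfect matching, then the number of closed subgraphs of maximum cardinality equals the number of perfect matchings of G. -/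
noncomputable section

/-- `M` is a perfect matching of `G`: a set of pairwise disjoint edges of `G`
covering every vertex exactly once, i.e. every vertex lies in exactly one edge
of `M`. -/
def IsPerfMatching {V : Type*} (G : SimpleGraph V) (M : Set (Sym2 V)) : Prop :=
  M ⊆ G.edgeSet ∧ ∀ v : V, ∃! e, e ∈ M ∧ v ∈ e

private theorem handshakeB {V : Type*} [Fintype V] (B : Set (Sym2 V))
    (hB : ∀ e ∈ B, ¬ e.IsDiag) :
    ∑ v, {e | e ∈ B ∧ v ∈ e}.ncard = 2 * B.ncard := by
  classical
  set H := SimpleGraph.fromEdgeSet B with hH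
  have hE : H.edgeSet = B := by
    rw [hH, SimpleGraph.edgeSet_fromEdgeSet, sdiff_eq_left]
    exact Set.disjoint_left.mpr (fun e he hd => hB e he hd)
  have h1 : ∀ v, {e | e ∈ B ∧ v ∈ e}.ncard = H.degree v := by
    intro v
    have h2 : {e | e ∈ B ∧ v ∈ e} = H.incidenceSet v := by
      rw [SimpleGraph.incidenceSet, hE]
    rw [h2, Set.ncard_eq_toFinset_card', ← SimpleGraph.incidenceFinset,
      SimpleGraph.card_incidenceFinset_eq_degree]
  simp only [h1]
  rw [SimpleGraph.sum_degrees_eq_twice_card_edges]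
  congr 1
  rw [SimpleGraph.edgeFinset, ← Set.ncard_eq_toFinset_card', hE]

private theorem splitdeg {V : Type*} [Fintype V] (E A : Set (Sym2 V)) (hA : A ⊆ E) (v : V) :
    {e | e ∈ E ∧ v ∈ e}.ncard = {e | e ∈ A ∧ v ∈ e}.ncard + {e | e ∈ E \ A ∧ v ∈ e}.ncard := by
  rw [← Set.ncard_union_eq ?_ (Set.toFinite _) (Set.toFinite _)]
  · congr 1
    ext e
    simp only [Set.mem_union, Set.mem_setOf_eq, Set.mem_diff]
    constructor
    · rintro ⟨he, hv⟩
      by_cases h : e ∈ A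
      · exact Or.inl ⟨h, hv⟩
      · exact Or.inr ⟨⟨he, h⟩, hv⟩
    · rintro (⟨h, hv⟩ | ⟨⟨h, _⟩, hv⟩)
      exacts [⟨hA h, hv⟩, ⟨h, hv⟩]
  · exact Set.disjoint_left.mpr (fun e ⟨h1, _⟩ ⟨⟨_, h2⟩, _⟩ => h2 h1)

private theorem pmdeg {V : Type*} (G : SimpleGraph V) (M : Set (Sym2 V))
    (hM : IsPerfMatching G M) (v : V) : {e | e ∈ M ∧ v ∈ e}.ncard = 1 := by
  obtain ⟨e₀, he₀, hu⟩ := hM.2 v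
  have h : {e | e ∈ M ∧ v ∈ e} = {e₀} := by
    ext e
    simp only [Set.mem_setOf_eq, Set.mem_singleton_iff]
    exact ⟨fun h => hu e h, fun h => h ▸ he₀⟩
  rw [h, Set.ncard_singleton]

private theorem part1 {V : Type*} [Fintype V] (G : SimpleGraph V)
    (hodd : ∀ v : V, Odd {e | e ∈ G.edgeSet ∧ v ∈ e}.ncard)
    (A : Set (Sym2 V)) (hA : A ⊆ G.edgeSet)
    (hAe : ∀ v : V, Even {e | e ∈ A ∧ v ∈ e}.ncard) :
      A.ncard ≤ G.edgeSet.ncard - Fintype.card V / 2 ∧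
        (A.ncard = G.edgeSet.ncard - Fintype.card V / 2 ↔
          IsPerfMatching G (G.edgeSet \ A)) := by
  classical
  set E := G.edgeSet with hEdef
  set B := E \ A with hBdef
  have hBnd : ∀ e ∈ B, ¬ e.IsDiag := fun e he => G.not_isDiag_of_mem_edgeSet he.1
  have hEnd : ∀ e ∈ E, ¬ e.IsDiag := fun e he => G.not_isDiag_of_mem_edgeSet he
  have hdeg : ∀ v, {e | e ∈ E ∧ v ∈ e}.ncard
      = {e | e ∈ A ∧ v ∈ e}.ncard + {e | e ∈ B ∧ v ∈ e}.ncard := splitdeg E A hA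
  have hBodd : ∀ v, Odd {e | e ∈ B ∧ v ∈ e}.ncard := by
    intro v
    have h := hodd v
    rw [hdeg v] at h
    rcases Nat.even_or_odd {e | e ∈ B ∧ v ∈ e}.ncard with he | ho
    · exact absurd ((hAe v).add he) (Nat.not_even_iff_odd.mpr h)
    · exact ho
  have hsumB : ∑ v, {e | e ∈ B ∧ v ∈ e}.ncard = 2 * B.ncard := handshakeB B hBnd
  have hsumE : ∑ v, {e | e ∈ E ∧ v ∈ e}.ncard = 2 * E.ncard := handshakeB E hEnd
  have hVeven : Fintype.card V % 2 = 0 := by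
    have h1 : (∑ v, {e | e ∈ E ∧ v ∈ e}.ncard) % 2 = 0 := by omega
    rw [Finset.sum_nat_mod] at h1
    have h2 : ∑ v : V, {e | e ∈ E ∧ v ∈ e}.ncard % 2 = ∑ v : V, 1 :=
      Finset.sum_congr rfl fun v _ => Nat.odd_iff.mp (hodd v)
    rw [h2, Finset.sum_const, smul_eq_mul, mul_one, Finset.card_univ] at h1
    omega
  have hcardle : Fintype.card V ≤ 2 * B.ncard := by
    rw [← hsumB]
    calc Fintype.card V = ∑ _v : V, 1 := by
          rw [Finset.sum_const, smul_eq_mul, mul_one, Finset.card_univ]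
      _ ≤ ∑ v, {e | e ∈ B ∧ v ∈ e}.ncard :=
          Finset.sum_le_sum fun v _ => (hBodd v).pos
  have hBcard : B.ncard = E.ncard - A.ncard := Set.ncard_diff hA (Set.toFinite A)
  have hAle : A.ncard ≤ E.ncard := Set.ncard_le_ncard hA (Set.toFinite E)
  constructor
  · omega
  constructor
  · intro heq
    have hB2 : 2 * B.ncard = Fintype.card V := by omega
    have hone : ∀ v : V, {e | e ∈ B ∧ v ∈ e}.ncard = 1 := by
      have hsum1 : ∑ _v : V, 1 = ∑ v, {e | e ∈ B ∧ v ∈ e}.ncard := by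
        rw [hsumB, Finset.sum_const, smul_eq_mul, mul_one, Finset.card_univ, hB2]
      have := (Finset.sum_eq_sum_iff_of_le
        (f := fun _ : V => 1) (g := fun v => {e | e ∈ B ∧ v ∈ e}.ncard)
        (fun v _ => (hBodd v).pos)).mp hsum1
      exact fun v => ((this v (Finset.mem_univ v)).symm)
    refine ⟨Set.diff_subset, fun v => ?_⟩
    obtain ⟨e₀, he₀⟩ := Set.ncard_eq_one.mp (hone v)
    refine ⟨e₀, ?_, fun e he => ?_⟩
    · have : e₀ ∈ {e | e ∈ B ∧ v ∈ e} := he₀ ▸ rfl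
      exact this
    · have : e ∈ ({e₀} : Set (Sym2 V)) := he₀ ▸ he
      exact this
  · intro hM
    have hone : ∀ v, {e | e ∈ B ∧ v ∈ e}.ncard = 1 := pmdeg G B hM
    have hB2 : 2 * B.ncard = Fintype.card V := by
      rw [← hsumB]
      simp only [hone]
      rw [Finset.sum_const, smul_eq_mul, mul_one, Finset.card_univ]
    omega

/-- Let `G` be a finite simple graph in which every vertex has odd degree. Then
every closed subgraph `A ⊆ E` (a set of edges in which every vertex has even
degree) satisfies `|A| ≤ |E| − |V|/2`, with equality iff `E ∖ A` is a perfect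
matching. Consequently, if `G` has a perfect matching, the number of closed
subgraphs of maximum cardinality `|E| − |V|/2` equals the number of perfect
matchings of `G`. -/
theorem closedSubgraphs_eq_perfectMatchings {V : Type*} [Fintype V]
    (G : SimpleGraph V)
    (hodd : ∀ v : V, Odd {e | e ∈ G.edgeSet ∧ v ∈ e}.ncard) :
    (∀ A ⊆ G.edgeSet, (∀ v : V, Even {e | e ∈ A ∧ v ∈ e}.ncard) →
      A.ncard ≤ G.edgeSet.ncard - Fintype.card V / 2 ∧
        (A.ncard = G.edgeSet.ncard - Fintype.card V / 2 ↔
          IsPerfMatching G (G.edgeSet \ A))) ∧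
    ((∃ M, IsPerfMatching G M) →
      {A : Set (Sym2 V) | A ⊆ G.edgeSet ∧ (∀ v : V, Even {e | e ∈ A ∧ v ∈ e}.ncard) ∧
          A.ncard = G.edgeSet.ncard - Fintype.card V / 2}.ncard =
        {M : Set (Sym2 V) | IsPerfMatching G M}.ncard) := by
  refine ⟨part1 G hodd, fun _ => ?_⟩
  set S := {A : Set (Sym2 V) | A ⊆ G.edgeSet ∧ (∀ v : V, Even {e | e ∈ A ∧ v ∈ e}.ncard) ∧
      A.ncard = G.edgeSet.ncard - Fintype.card V / 2} with hS
  have hinj : Set.InjOn (fun A => G.edgeSet \ A) S := by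
    intro A hA A' hA' h
    have h2 := congrArg (fun X => G.edgeSet \ X) h
    simpa [Set.diff_diff_cancel_left hA.1, Set.diff_diff_cancel_left hA'.1] using h2
  have himg : (fun A => G.edgeSet \ A) '' S = {M : Set (Sym2 V) | IsPerfMatching G M} := by
    ext M
    constructor
    · rintro ⟨A, ⟨hA1, hA2, hA3⟩, rfl⟩
      exact (part1 G hodd A hA1 hA2).2.mp hA3
    · intro hM
      have heven : ∀ v : V, Even {e | e ∈ G.edgeSet \ M ∧ v ∈ e}.ncard := by
        intro v
        have hd := splitdeg G.edgeSet M hM.1 v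
        rw [pmdeg G M hM v] at hd
        have ho := hodd v
        rw [hd, Nat.odd_iff] at ho
        rw [Nat.even_iff]
        omega
      refine ⟨G.edgeSet \ M, ⟨Set.diff_subset, heven, ?_⟩, Set.diff_diff_cancel_left hM.1⟩
      refine (part1 G hodd (G.edgeSet \ M) Set.diff_subset heven).2.mpr ?_
      rw [Set.diff_diff_cancel_left hM.1]
      exact hM
  rw [← himg, Set.ncard_image_of_injOn hinj]
end
end
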